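/- arXiv:2306.12415 — 10 statements merged into one kernel-verified Lean document; each statement's English description precedes it below -/
import Mathlib

section
/- Let G and H be finite groups whose orders have the same prime factors, and let α : G →* MulAut H be an action of G on H by automorphisms. If a, b ∈ H are such that the cardinalities of the orbits O(a) and O(b) are coprime, then Stab(a)·Stab(b) = G (every element of G is a product of an element stabilizing a and an element stabilizing b), and the pointwise product of sets O(a)·O(b) equals the orbit O(ab). -/
/-!
The stabilizer of `(a, b)` under the diagonal action is `Stab(a) ⊓ Stab(b)`, whose index is
divisible by the coprime indices `|O(a)|` and `|O(b)|` and at most their product. Hence the orbit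
of `(a, b)` has `|O(a)| * |O(b)|` elements, i.e. `G` acts transitively on `O(a) × O(b)`: any
`(g • a, h • b)` is `(k • a, k • b)` for one `k`. With `g = 1` this factors `h` through the two
stabilizers, and since `α k` is multiplicative it gives `O(a) * O(b) ⊆ O(ab)`.
-/

open Pointwise

def orbitOf {G H : Type*} [Group G] [Group H] (α : G →* MulAut H) (a : H) : Set H :=
  Set.range fun g : G => α g a

theorem Subgroup.index_inf_of_coprime {G : Type*} [Group G] {H K : Subgroup G}
    (hco : Nat.Coprime H.index K.index) : (H ⊓ K).index = H.index * K.index := by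
  rcases eq_or_ne H.index 0 with hH | hH
  · rw [hH, Nat.coprime_zero_left, Subgroup.index_eq_one] at hco
    simp [hco, hH]
  rcases eq_or_ne K.index 0 with hK | hK
  · rw [hK, Nat.coprime_zero_right, Subgroup.index_eq_one] at hco
    simp [hco, hK]
  refine le_antisymm Subgroup.index_inf_le (Nat.le_of_dvd ?_ ?_)
  · exact Nat.pos_of_ne_zero (Subgroup.index_inf_ne_zero hH hK)
  · exact hco.mul_dvd_of_dvd_of_dvd (Subgroup.index_dvd_of_le inf_le_left)
      (Subgroup.index_dvd_of_le inf_le_right)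

namespace MulAction

variable {G X Y : Type*} [Group G] [MulAction G X] [MulAction G Y]

theorem stabilizer_prod (x : X) (y : Y) :
    stabilizer G (x, y) = stabilizer G x ⊓ stabilizer G y := by
  ext g
  simp [Prod.ext_iff]

theorem orbit_prod_subset (x : X) (y : Y) : orbit G (x, y) ⊆ orbit G x ×ˢ orbit G y := by
  rintro _ ⟨g, rfl⟩
  exact ⟨⟨g, rfl⟩, ⟨g, rfl⟩⟩

theorem orbit_prod_eq_of_coprime [Finite G] {x : X} {y : Y}
    (hco : Nat.Coprime (orbit G x).ncard (orbit G y).ncard) :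
    orbit G (x, y) = orbit G x ×ˢ orbit G y := by
  refine Set.eq_of_subset_of_ncard_le (orbit_prod_subset x y) ?_
    ((Set.finite_range _).prod (Set.finite_range _))
  rw [← index_stabilizer, ← index_stabilizer] at hco
  rw [Set.ncard_prod, ← index_stabilizer, ← index_stabilizer, ← index_stabilizer, stabilizer_prod,
    Subgroup.index_inf_of_coprime hco]

theorem exists_smul_eq_and_smul_eq_of_coprime [Finite G] {x : X} {y : Y}
    (hco : Nat.Coprime (orbit G x).ncard (orbit G y).ncard) (g h : G) :
    ∃ k : G, k • x = g • x ∧ k • y = h • y := by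
  have hmem : (g • x, h • y) ∈ orbit G (x, y) := by
    rw [orbit_prod_eq_of_coprime hco]
    exact ⟨⟨g, rfl⟩, ⟨h, rfl⟩⟩
  obtain ⟨k, hk⟩ := hmem
  exact ⟨k, congrArg Prod.fst hk, congrArg Prod.snd hk⟩

end MulAction

theorem stmt_0_general {G H : Type*} [Group G] [Group H] [Finite G]
    (α : G →* MulAut H)
    (a b : H)
    (hco : Nat.Coprime (orbitOf α a).ncard (orbitOf α b).ncard) :
    (∀ g : G, ∃ s t : G, α s a = a ∧ α t b = b ∧ g = s * t) ∧
    orbitOf α a * orbitOf α b = orbitOf α (a * b) := by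
  let _ : MulAction G H := MulAction.compHom H α
  have transitive : ∀ g h : G, ∃ k, α k a = α g a ∧ α k b = α h b :=
    MulAction.exists_smul_eq_and_smul_eq_of_coprime hco
  refine ⟨fun g => ?_, ?_⟩
  · obtain ⟨k, hka, hkb⟩ := transitive 1 g
    refine ⟨k, k⁻¹ * g, by simpa using hka, ?_, by group⟩
    rw [map_mul, MulAut.mul_apply, ← hkb]
    simp
  · ext c
    constructor
    · rintro ⟨-, ⟨g, rfl⟩, -, ⟨h, rfl⟩, rfl⟩
      obtain ⟨k, hka, hkb⟩ := transitive g h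
      exact ⟨k, by simp only [map_mul, hka, hkb]⟩
    · rintro ⟨g, rfl⟩
      exact ⟨α g a, ⟨g, rfl⟩, α g b, ⟨g, rfl⟩, (map_mul (α g) a b).symm⟩

theorem stmt_0 {G H : Type*} [Group G] [Group H] [Finite G] [Finite H]
    (α : G →* MulAut H)
    (hpf : ∀ p : ℕ, p.Prime → (p ∣ Nat.card G ↔ p ∣ Nat.card H))
    (a b : H)
    (hco : Nat.Coprime (orbitOf α a).ncard (orbitOf α b).ncard) :
    (∀ g : G, ∃ s t : G, α s a = a ∧ α t b = b ∧ g = s * t) ∧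
    orbitOf α a * orbitOf α b = orbitOf α (a * b) :=
  stmt_0_general α a b hco
end

section
/- Let G and H be finite groups whose orders have the same prime factors, and let α : G →* MulAut H be an action by automorphisms. Let L₁ and L₂ be non-trivial orbits with |L₂| > |L₁|, such that gcd(|L₁|,|L₂|) = 1 and no non-trivial orbit L₃ satisfies both gcd(|L₃|,|L₁|) > 1 and gcd(|L₃|,|L₂|) > 1. Then the subgroup K of H generated by the set L₁⁻¹·L₁ = {x⁻¹y : x, y ∈ L₁} is non-trivial (|K| > 1) and |K| divides |L₂|. -/
open Pointwise

/-! Since `|L₁|` and `|L₂|` are coprime, `G` acts transitively on `L₁ × L₂`, so the orbit of `ab`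
is `L₁L₂`; its size divides `|L₁||L₂|` and is at least `|L₂|`, and the gcd condition on the
orbit of `ab` forces `|L₁L₂| = |L₂|`. Hence `uL₂ = L₁L₂` for every `u ∈ L₁`, so each `u⁻¹v` with
`u, v ∈ L₁` maps `L₂` onto itself by left multiplication. Then `L₂` is a union of right cosets of
`K`, and `|K|` divides `|L₂|`. -/

theorem Nat.eq_of_dvd_mul_of_coprime_or {n m₁ m₂ : ℕ} (hdvd : n ∣ m₁ * m₂) (hm₁ : 0 < m₁)
    (hlt : m₁ < m₂) (hle : m₂ ≤ n) (hcop : n.Coprime m₁ ∨ n.Coprime m₂) : n = m₂ := by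
  rcases hcop with h | h
  · exact le_antisymm (Nat.le_of_dvd (hm₁.trans hlt) (h.dvd_of_dvd_mul_left hdvd)) hle
  · have := Nat.le_of_dvd hm₁ (h.dvd_of_dvd_mul_right hdvd)
    omega

namespace MulAction

variable {G α β : Type*} [Group G] [MulAction G α] [MulAction G β]

theorem ncard_orbit_dvd_of_stabilizer_le {a : α} {b : β} (h : stabilizer G a ≤ stabilizer G b) :
    (orbit G b).ncard ∣ (orbit G a).ncard := by
  rw [← index_stabilizer, ← index_stabilizer]
  exact Subgroup.index_dvd_of_le h

theorem orbit_prod_subset_s3 (a : α) (b : β) : orbit G (a, b) ⊆ orbit G a ×ˢ orbit G b := by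
  rintro _ ⟨g, rfl⟩
  exact ⟨⟨g, rfl⟩, ⟨g, rfl⟩⟩

theorem orbit_prod_eq_of_coprime_s3 [Finite α] [Finite β] {a : α} {b : β}
    (h : (orbit G a).ncard.Coprime (orbit G b).ncard) :
    orbit G (a, b) = orbit G a ×ˢ orbit G b := by
  refine Set.eq_of_subset_of_ncard_le (orbit_prod_subset_s3 a b) ?_ (Set.toFinite _)
  have hfst : stabilizer G (a, b) ≤ stabilizer G a := fun g hg => congrArg Prod.fst hg
  have hsnd : stabilizer G (a, b) ≤ stabilizer G b := fun g hg => congrArg Prod.snd hg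
  rw [Set.ncard_prod]
  exact Nat.le_of_dvd ((Set.ncard_pos (Set.toFinite _)).2 ⟨_, mem_orbit_self _⟩)
    (h.mul_dvd_of_dvd_of_dvd (ncard_orbit_dvd_of_stabilizer_le hfst)
      (ncard_orbit_dvd_of_stabilizer_le hsnd))

end MulAction

namespace MulDistribMulAction

open MulAction

variable {G H : Type*} [Group G] [Group H] [MulDistribMulAction G H] [Finite H]

theorem orbit_mul_eq_of_coprime {a b : H} (h : (orbit G a).ncard.Coprime (orbit G b).ncard) :
    orbit G (a * b) = orbit G a * orbit G b := by
  rw [← Set.image_mul_prod, ← orbit_prod_eq_of_coprime_s3 h]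
  ext y
  simp [orbit, Set.mem_range, smul_mul']

theorem ncard_orbit_mul_dvd_of_coprime {a b : H}
    (h : (orbit G a).ncard.Coprime (orbit G b).ncard) :
    (orbit G (a * b)).ncard ∣ (orbit G a).ncard * (orbit G b).ncard := by
  rw [← Set.ncard_prod, ← orbit_prod_eq_of_coprime_s3 h]
  refine ncard_orbit_dvd_of_stabilizer_le fun g hg => ?_
  simp only [mem_stabilizer_iff, Prod.smul_mk, Prod.mk.injEq] at hg ⊢
  rw [smul_mul', hg.1, hg.2]

end MulDistribMulAction

namespace Subgroup

variable {H : Type*} [Group H]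

theorem closure_inv_mul_le_stabilizer [Finite H] {s t : Set H} (h : (s * t).ncard ≤ t.ncard) :
    closure (s⁻¹ * s) ≤ MulAction.stabilizer H t := by
  have htrans : ∀ u ∈ s, u • t = s * t := fun u hu =>
    Set.eq_of_subset_of_ncard_le (Set.smul_set_subset_mul hu) (by rwa [Set.ncard_smul_set])
      (Set.toFinite _)
  rw [closure_le]
  rintro _ ⟨u, hu, v, hv, rfl⟩
  rw [SetLike.mem_coe, MulAction.mem_stabilizer_iff, mul_smul, htrans v hv,
    ← htrans u⁻¹ hu, smul_inv_smul]

theorem closure_inv_mul_ne_bot {s : Set H} (hs : s.Nontrivial) : closure (s⁻¹ * s) ≠ ⊥ := by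
  obtain ⟨u, hu, v, hv, huv⟩ := hs
  rw [Ne, closure_eq_bot_iff]
  intro h
  have : u⁻¹ * v = 1 := h (Set.mul_mem_mul (by simpa using hu) hv)
  exact huv (inv_mul_eq_one.mp this)

theorem card_dvd_ncard_of_le_stabilizer {K : Subgroup H} {t : Set H}
    (h : K ≤ MulAction.stabilizer H t) : Nat.card K ∣ t.ncard := by
  -- `t⁻¹` is a union of left cosets of `K`
  have hK : t⁻¹ * (K : Set H) = t⁻¹ := by
    refine (Set.mul_subset_iff.2 fun x hx k hk => ?_).antisymm
      (Set.subset_mul_left _ K.one_mem)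
    have : k⁻¹ • x⁻¹ ∈ k⁻¹ • t := Set.smul_mem_smul_set hx
    rw [MulAction.mem_stabilizer_iff.mp (h (K.inv_mem hk))] at this
    simpa using this
  rw [← Set.ncard_inv, ← Nat.card_coe_set_eq, ← hK, card_mul_eq_card_subgroup_mul_card_quotient]
  exact dvd_mul_right _ _

end Subgroup

theorem stmt_3_general {G H : Type*} [Group G] [Group H] [Finite H]
    (α : G →* MulAut H)
    (a b : H)
    (ha : 1 < (orbitOf α a).ncard) (hb : 1 < (orbitOf α b).ncard)
    (hlt : (orbitOf α a).ncard < (orbitOf α b).ncard)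
    (hco : Nat.gcd (orbitOf α a).ncard (orbitOf α b).ncard = 1)
    (hdist : ∀ c : H, 1 < (orbitOf α c).ncard →
      ¬(1 < Nat.gcd (orbitOf α c).ncard (orbitOf α a).ncard ∧
        1 < Nat.gcd (orbitOf α c).ncard (orbitOf α b).ncard)) :
    1 < Nat.card (Subgroup.closure ((orbitOf α a)⁻¹ * orbitOf α a)) ∧
    Nat.card (Subgroup.closure ((orbitOf α a)⁻¹ * orbitOf α a)) ∣ (orbitOf α b).ncard := by
  let := MulDistribMulAction.compHom H α
  have horbit : ∀ c, orbitOf α c = MulAction.orbit G c := fun _ => rfl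
  simp only [horbit] at *
  set L₁ := MulAction.orbit G a
  set L₂ := MulAction.orbit G b
  have hL₂_le : L₂.ncard ≤ (L₁ * L₂).ncard := by
    rw [← Set.ncard_smul_set a L₂]
    exact Set.ncard_le_ncard (Set.smul_set_subset_mul (MulAction.mem_orbit_self a))
  have hmul : MulAction.orbit G (a * b) = L₁ * L₂ :=
    MulDistribMulAction.orbit_mul_eq_of_coprime hco
  have hn : 1 < (L₁ * L₂).ncard := hb.trans_le hL₂_le
  have hcop : (L₁ * L₂).ncard.Coprime L₁.ncard ∨ (L₁ * L₂).ncard.Coprime L₂.ncard := by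
    have h := hdist (a * b) (hmul ▸ hn)
    rw [hmul] at h
    have := Nat.gcd_pos_of_pos_left L₁.ncard (one_pos.trans hn)
    have := Nat.gcd_pos_of_pos_left L₂.ncard (one_pos.trans hn)
    unfold Nat.Coprime
    omega
  have hcard : (L₁ * L₂).ncard = L₂.ncard :=
    Nat.eq_of_dvd_mul_of_coprime_or (hmul ▸ MulDistribMulAction.ncard_orbit_mul_dvd_of_coprime hco)
      (one_pos.trans ha) hlt hL₂_le hcop
  have hK := Subgroup.closure_inv_mul_le_stabilizer hcard.le
  exact ⟨(Subgroup.one_lt_card_iff_ne_bot _).2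
      (Subgroup.closure_inv_mul_ne_bot (Set.one_lt_ncard_iff_nontrivial.1 ha)),
    Subgroup.card_dvd_ncard_of_le_stabilizer hK⟩

theorem stmt_3 {G H : Type*} [Group G] [Group H] [Finite G] [Finite H]
    (α : G →* MulAut H)
    (hpf : ∀ p : ℕ, p.Prime → (p ∣ Nat.card G ↔ p ∣ Nat.card H))
    (a b : H)
    (ha : 1 < (orbitOf α a).ncard) (hb : 1 < (orbitOf α b).ncard)
    (hlt : (orbitOf α a).ncard < (orbitOf α b).ncard)
    (hco : Nat.gcd (orbitOf α a).ncard (orbitOf α b).ncard = 1)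
    (hdist : ∀ c : H, 1 < (orbitOf α c).ncard →
      ¬(1 < Nat.gcd (orbitOf α c).ncard (orbitOf α a).ncard ∧
        1 < Nat.gcd (orbitOf α c).ncard (orbitOf α b).ncard)) :
    1 < Nat.card (Subgroup.closure ((orbitOf α a)⁻¹ * orbitOf α a)) ∧
    Nat.card (Subgroup.closure ((orbitOf α a)⁻¹ * orbitOf α a)) ∣ (orbitOf α b).ncard :=
  stmt_3_general α a b ha hb hlt hco hdist
end

section
/- Let G and H be finite groups and let α : G →* MulAut H be an action of G on H by automorphisms. For each natural number m, let c(m) be the number of orbits of the action having exactly m elements, and let H^G = {h ∈ H : α(g)(h) = h for all g ∈ G} be the fixed-point subgroup. Then |H^G| divides m·c(m) for every m ≥ 0. -/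
theorem card_ncard_block_eq_eq_mul_card_blocks {X : Type*} [Finite X] (o : X → Set X)
    (self_mem : ∀ x, x ∈ o x) (eq_of_mem : ∀ x y, y ∈ o x → o y = o x) (m : ℕ) :
    Nat.card {x // (o x).ncard = m} =
      m * Nat.card {L : Set X // (∃ a, L = o a) ∧ L.ncard = m} := by
  let Blocks := {L : Set X // (∃ a, L = o a) ∧ L.ncard = m}
  have eq_of_mem_block (L : Blocks) {y : X} (hy : y ∈ L.1) : o y = L.1 := by
    obtain ⟨_, ⟨a, rfl⟩, _⟩ := L
    exact eq_of_mem a y hy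
  let e : {x // (o x).ncard = m} ≃ Σ L : Blocks, L.1 :=
    { toFun x := ⟨⟨o x, ⟨x, rfl⟩, x.2⟩, ⟨x, self_mem x⟩⟩
      invFun p := ⟨p.2, by rw [eq_of_mem_block p.1 p.2.2]; exact p.1.2.2⟩
      left_inv _ := rfl
      right_inv := by
        rintro ⟨⟨L, hL⟩, y, hy⟩
        obtain rfl := (eq_of_mem_block ⟨L, hL⟩ hy).symm
        rfl }
  have : Fintype Blocks := Fintype.ofFinite _
  rw [Nat.card_congr e, Nat.card_sigma, Nat.card_eq_fintype_card (α := Blocks), mul_comm,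
    ← Finset.card_univ]
  exact Finset.sum_const_nat fun L _ => (Nat.card_coe_set_eq L.1).trans L.2.2

theorem Subgroup.card_dvd_card_of_mul_mem {H : Type*} [Group H] (S : Subgroup H) (X : Set H)
    (hX : ∀ s ∈ S, ∀ x ∈ X, s * x ∈ X) : Nat.card S ∣ Nat.card X := by
  let P : SubMulAction S H := ⟨X, fun {s x} hx => hX s s.2 x hx⟩
  have free (x : P) : MulAction.stabilizer S x = ⊥ := by
    ext s
    rw [MulAction.mem_stabilizer_iff, Subgroup.mem_bot, Subtype.ext_iff]
    exact mul_eq_right.trans OneMemClass.coe_eq_one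
  exact Dvd.intro_left _ ((Nat.card_congr (MulAction.selfEquivOrbitsQuotientProd free)).trans
    (Nat.card_prod _ _)).symm

section orbitOf

variable {G H : Type*} [Group G] [Group H] (α : G →* MulAut H)

theorem mem_orbitOf_self (a : H) : a ∈ orbitOf α a := ⟨1, by simp⟩

theorem orbitOf_eq_of_mem {a b : H} (h : b ∈ orbitOf α a) : orbitOf α b = orbitOf α a := by
  obtain ⟨g, rfl⟩ := h
  ext x
  constructor
  · rintro ⟨g', rfl⟩
    exact ⟨g' * g, by simp⟩
  · rintro ⟨g', rfl⟩
    exact ⟨g' * g⁻¹, by simp⟩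

theorem orbitOf_mul_of_forall_eq {f : H} (hf : ∀ g, α g f = f) (b : H) :
    orbitOf α (f * b) = (f * ·) '' orbitOf α b := by
  simp only [orbitOf, ← Set.range_comp, Function.comp_def, map_mul, hf]

theorem ncard_orbitOf_mul_of_forall_eq {f : H} (hf : ∀ g, α g f = f) (b : H) :
    (orbitOf α (f * b)).ncard = (orbitOf α b).ncard := by
  rw [orbitOf_mul_of_forall_eq α hf, Set.ncard_image_of_injective _ (mul_right_injective f)]

end orbitOf

theorem stmt_7_general {G H : Type*} [Group G] [Group H] [Finite H]
    (α : G →* MulAut H) (m : ℕ) :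
    Nat.card {h : H // ∀ g : G, α g h = h} ∣
      m * Nat.card {L : Set H // (∃ a : H, L = orbitOf α a) ∧ L.ncard = m} := by
  let : MulDistribMulAction G H := .compHom H α
  rw [← card_ncard_block_eq_eq_mul_card_blocks (orbitOf α) (mem_orbitOf_self α)
    fun _ _ => orbitOf_eq_of_mem α]
  exact (FixedPoints.subgroup G H).card_dvd_card_of_mul_mem {x | (orbitOf α x).ncard = m}
    fun f hf x hx => (ncard_orbitOf_mul_of_forall_eq α hf x).trans hx

theorem stmt_7 {G H : Type*} [Group G] [Group H] [Finite G] [Finite H]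
    (α : G →* MulAut H) (m : ℕ) :
    Nat.card {h : H // ∀ g : G, α g h = h} ∣
      m * Nat.card {L : Set H // (∃ a : H, L = orbitOf α a) ∧ L.ncard = m} :=
  stmt_7_general α m
end

section
/- Let p be a prime number and let G and H be finite p-groups, with α : G →* MulAut H an action of G on H by automorphisms. Then p − 1 divides the total number of non-trivial orbits of the action (equivalently, the number of vertices of the common divisor graph C(α) is a multiple of p − 1). -/
/-!
Modulo `p - 1` every power of `p` is `1`. Orbits of a `p`-group have `p`-power size, so the
number of orbits is congruent to `|H| ≡ 1`. The trivial orbits are the fixed points, and since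
`G` acts by automorphisms these form a subgroup of `H`, whose order is again `≡ 1`. Hence the
number of non-trivial orbits is `≡ 0`.
-/

theorem Nat.pow_modEq_sub_one {p : ℕ} (hp : 1 ≤ p) (k : ℕ) : p ^ k ≡ 1 [MOD p - 1] := by
  simpa using (Nat.modEq_sub hp).pow k

theorem Nat.card_subtype_and_add_card_subtype_and_not {α : Type*} (p q : α → Prop)
    [Finite {x // p x}] :
    Nat.card {x // p x ∧ q x} + Nat.card {x // p x ∧ ¬q x} = Nat.card {x // p x} := by
  classical
  rw [← Nat.card_congr (Equiv.subtypeSubtypeEquivSubtypeInter p q),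
    ← Nat.card_congr (Equiv.subtypeSubtypeEquivSubtypeInter p (¬q ·)), ← Nat.card_sum]
  exact Nat.card_congr (Equiv.sumCompl _)

namespace MulAction

variable (G X : Type*) [Group G] [MulAction G X]

noncomputable def orbitSetsEquivQuotient :
    {L : Set X // ∃ a, L = orbit G a} ≃ orbitRel.Quotient G X :=
  ((Equiv.ofInjective _ orbitRel.Quotient.orbit_injective).trans <|
    Equiv.subtypeEquivRight fun L => by
      simp only [Set.mem_range, Quotient.exists, eq_comm (a := L)]
      rfl).symm

variable {G X} in
theorem orbit_eq_singleton_of_mem_fixedPoints {a : X} (ha : a ∈ fixedPoints G X) :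
    orbit G a = {a} :=
  (subsingleton_orbit_iff_mem_fixedPoints.mpr ha).eq_singleton_of_mem (mem_orbit_self a)

noncomputable def fixedPointsEquivSubsingletonOrbitSets [Finite X] :
    fixedPoints G X ≃ {L : Set X // (∃ a, L = orbit G a) ∧ ¬1 < L.ncard} :=
  Equiv.ofBijective
    (fun a ↦ ⟨{(a : X)}, ⟨a, (orbit_eq_singleton_of_mem_fixedPoints a.2).symm⟩, by simp⟩) <| by
    refine ⟨fun a b h ↦ Subtype.ext (Set.singleton_injective (congrArg Subtype.val h)), ?_⟩
    rintro ⟨_, ⟨a, rfl⟩, h⟩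
    have ha : a ∈ fixedPoints G X := by
      rwa [← subsingleton_orbit_iff_mem_fixedPoints, ← Set.ncard_le_one_iff_subsingleton, ← not_lt]
    exact ⟨⟨a, ha⟩, Subtype.ext (orbit_eq_singleton_of_mem_fixedPoints ha).symm⟩

theorem card_nontrivialOrbitSets_add_card_fixedPoints [Finite X] :
    Nat.card {L : Set X // (∃ a, L = orbit G a) ∧ 1 < L.ncard} + Nat.card (fixedPoints G X) =
      Nat.card (orbitRel.Quotient G X) := by
  have := Finite.of_equiv _ (orbitSetsEquivQuotient G X).symm
  rw [Nat.card_congr (fixedPointsEquivSubsingletonOrbitSets G X),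
    Nat.card_subtype_and_add_card_subtype_and_not, Nat.card_congr (orbitSetsEquivQuotient G X)]

theorem card_eq_sum_card_orbit [Finite X] [Fintype (orbitRel.Quotient G X)] :
    Nat.card X = ∑ ω : orbitRel.Quotient G X, Nat.card ω.orbit := by
  rw [Nat.card_congr (selfEquivSigmaOrbits' G X), Nat.card_sigma]

end MulAction

namespace IsPGroup

variable {p : ℕ} [Fact p.Prime] {G : Type*} [Group G]

theorem card_modEq_one [Finite G] (hG : IsPGroup p G) : Nat.card G ≡ 1 [MOD p - 1] := by
  obtain ⟨n, hn⟩ := iff_card.mp hG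
  exact hn ▸ Nat.pow_modEq_sub_one (Fact.out : p.Prime).one_le n

theorem card_orbitRel_quotient_modEq_card (hG : IsPGroup p G) (X : Type*) [MulAction G X]
    [Finite X] : Nat.card (MulAction.orbitRel.Quotient G X) ≡ Nat.card X [MOD p - 1] := by
  have := Fintype.ofFinite (MulAction.orbitRel.Quotient G X)
  rw [MulAction.card_eq_sum_card_orbit G X, Nat.card_eq_fintype_card, ← Finset.card_univ,
    Finset.card_eq_sum_ones]
  refine Nat.ModEq.sum fun ω _ ↦ ?_
  obtain ⟨n, hn⟩ := hG.card_orbit ω.out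
  rw [MulAction.orbitRel.Quotient.orbit_eq_orbit_out ω Quotient.out_eq', hn]
  exact (Nat.pow_modEq_sub_one (Fact.out : p.Prime).one_le n).symm

end IsPGroup

theorem stmt_10_general {G H : Type*} [Group G] [Group H] [Finite H]
    {p : ℕ} (hp : p.Prime) (hG : IsPGroup p G) (hH : IsPGroup p H)
    (α : G →* MulAut H) :
    p - 1 ∣ Nat.card {L : Set H // (∃ a : H, L = orbitOf α a) ∧ 1 < L.ncard} := by
  have : Fact p.Prime := ⟨hp⟩
  let _ : MulDistribMulAction G H := MulDistribMulAction.compHom H α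
  have hfixed : Nat.card (MulAction.fixedPoints G H) ≡ 1 [MOD p - 1] :=
    (hH.to_subgroup (FixedPoints.subgroup G H)).card_modEq_one
  have hcount : Nat.card {L : Set H // (∃ a, L = MulAction.orbit G a) ∧ 1 < L.ncard} +
      Nat.card (MulAction.fixedPoints G H) ≡ 0 + 1 [MOD p - 1] :=
    MulAction.card_nontrivialOrbitSets_add_card_fixedPoints G H ▸
      (hG.card_orbitRel_quotient_modEq_card H).trans hH.card_modEq_one
  exact Nat.modEq_zero_iff_dvd.mp (hfixed.add_right_cancel hcount)

theorem stmt_10 {G H : Type*} [Group G] [Group H] [Finite G] [Finite H]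
    {p : ℕ} (hp : p.Prime) (hG : IsPGroup p G) (hH : IsPGroup p H)
    (α : G →* MulAut H) :
    p - 1 ∣ Nat.card {L : Set H // (∃ a : H, L = orbitOf α a) ∧ 1 < L.ncard} :=
  stmt_10_general hp hG hH α
end

section
/- Let p > q be prime numbers with p ≡ 1 (mod q), let H be a group of order pq and G a finite group whose order divides p²q², and let α : G →* MulAut H be an action of G on H by automorphisms. If the fixed-point subgroup H^G has order p, then every non-trivial orbit of the action has size exactly p, and the number of non-trivial orbits is exactly q − 1. -/
open Pointwise

theorem Nat.minFac_mul_of_prime_of_lt {p q : ℕ} (hp : p.Prime) (hq : q.Prime) (hlt : q < p) :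
    (p * q).minFac = q := by
  have hmin : (p * q).minFac.Prime := Nat.minFac_prime (one_lt_mul hp.one_lt.le hq.one_lt).ne'
  rcases (Nat.Prime.dvd_mul hmin).mp (Nat.minFac_dvd _) with h | h
  · have hle : (p * q).minFac ≤ q := Nat.minFac_le_of_dvd hq.two_le (dvd_mul_left q p)
    exact absurd ((Nat.prime_dvd_prime_iff_eq hmin hp).mp h) (by omega)
  · exact (Nat.prime_dvd_prime_iff_eq hmin hq).mp h

theorem Nat.coprime_sub_one_of_dvd_sq_mul_sq {n p q : ℕ} (hp : p.Prime) (hq : q.Prime)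
    (hlt : q < p) (hn : n ∣ p ^ 2 * q ^ 2) : n.Coprime (q - 1) := by
  have hq2 := hq.two_le
  have hcop : ∀ r : ℕ, r.Prime → q ≤ r → (r ^ 2).Coprime (q - 1) := fun r hr hqr =>
    (Nat.coprime_of_lt_prime (by omega) (by omega) hr).pow_left 2
  exact ((hcop p hp hlt.le).mul_left (hcop q hq le_rfl)).coprime_dvd_left hn

theorem MonoidHom.eq_one_of_coprime_card {G K : Type*} [Group G] [Group K] (f : G →* K)
    (h : (Nat.card G).Coprime (Nat.card K)) : f = 1 := by
  ext g
  have hdvd : orderOf (f g) ∣ (Nat.card G).gcd (Nat.card K) :=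
    Nat.dvd_gcd ((orderOf_map_dvd f g).trans (orderOf_dvd_natCard g)) (orderOf_dvd_natCard _)
  rwa [h, Nat.dvd_one, orderOf_eq_one_iff] at hdvd

theorem QuotientGroup.preimage_mk_singleton_mk {H : Type*} [Group H] (N : Subgroup H) (a : H) :
    (QuotientGroup.mk : H → H ⧸ N) ⁻¹' {(a : H ⧸ N)} = a • (N : Set H) := by
  ext b
  rw [Set.mem_preimage, Set.mem_singleton_iff, mem_leftCoset_iff, SetLike.mem_coe, eq_comm,
    QuotientGroup.eq]

theorem Subgroup.card_leftCosets_ne_self {H : Type*} [Group H] (N : Subgroup H) :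
    Nat.card {L : Set H // ∃ a ∉ N, L = a • (N : Set H)} = N.index - 1 := by
  have hinj : Function.Injective fun x : H ⧸ N => (QuotientGroup.mk : H → H ⧸ N) ⁻¹' {x} :=
    fun x y hxy => by
      obtain ⟨a, rfl⟩ := QuotientGroup.mk_surjective x
      simpa using congrArg (a ∈ ·) hxy
  have hmk_ne : ∀ a : H, (a : H ⧸ N) ≠ ((1 : H) : H ⧸ N) ↔ a ∉ N := fun a => by
    rw [Ne, eq_comm, QuotientGroup.eq, inv_one, one_mul]
  have hset : {L : Set H | ∃ a ∉ N, L = a • (N : Set H)} =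
      (fun x : H ⧸ N => (QuotientGroup.mk : H → H ⧸ N) ⁻¹' {x}) ''
        (Set.univ \ {((1 : H) : H ⧸ N)}) := by
    ext L
    simp only [Set.mem_ofPred_eq, Set.mem_image, Set.mem_sdiff, Set.mem_univ, true_and,
      Set.mem_singleton_iff]
    constructor
    · rintro ⟨a, ha, rfl⟩
      exact ⟨a, (hmk_ne a).mpr ha, QuotientGroup.preimage_mk_singleton_mk N a⟩
    · rintro ⟨x, hx, rfl⟩
      obtain ⟨a, rfl⟩ := QuotientGroup.mk_surjective x
      exact ⟨a, (hmk_ne a).mp hx, QuotientGroup.preimage_mk_singleton_mk N a⟩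
  rw [← Set.coe_ofPred, Nat.card_coe_set_eq, hset, Set.ncard_image_of_injective _ hinj,
    Set.ncard_sdiff_singleton_of_mem (Set.mem_univ _), Set.ncard_univ, Subgroup.index_eq_card]

section Action

variable {G H : Type*} [Group G] [Group H] (α : G →* MulAut H)

def fixedSubgroup : Subgroup H where
  carrier := {h | ∀ g, α g h = h}
  one_mem' g := map_one (α g)
  mul_mem' hx hy g := by rw [map_mul, hx g, hy g]
  inv_mem' hx g := by rw [map_inv, hx g]

def quotientAction (N : Subgroup H) [N.Normal] (hN : ∀ g, N.map (α g : H →* H) = N) :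
    G →* MulAut (H ⧸ N) where
  toFun g := QuotientGroup.congr N N (α g) (hN g)
  map_one' := by
    ext x
    induction x using QuotientGroup.induction_on
    simp
  map_mul' g g' := by
    ext x
    induction x using QuotientGroup.induction_on
    simp

variable {α}

theorem map_fixedSubgroup (g : G) : (fixedSubgroup α).map (α g : H →* H) = fixedSubgroup α := by
  ext h
  refine ⟨?_, fun hh => ⟨h, hh, hh g⟩⟩
  rintro ⟨k, hk, rfl⟩
  rwa [MonoidHom.coe_coe, hk g]

theorem quotientAction_eq_one_of_coprime {N : Subgroup H} [N.Normal] [N.FiniteIndex]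
    [IsCyclic (H ⧸ N)] (hN : ∀ g, N.map (α g : H →* H) = N)
    (hcop : (Nat.card G).Coprime N.index.totient) : quotientAction α N hN = 1 :=
  MonoidHom.eq_one_of_coprime_card _ (by rwa [IsCyclic.card_mulAut, ← Subgroup.index_eq_card])

theorem inv_mul_apply_mem_of_quotientAction_eq_one {N : Subgroup H} [N.Normal]
    {hN : ∀ g, N.map (α g : H →* H) = N} (h : quotientAction α N hN = 1) (g : G) (a : H) :
    a⁻¹ * α g a ∈ N :=
  QuotientGroup.eq.mp (DFunLike.congr_fun (DFunLike.congr_fun h g) (a : H ⧸ N)).symm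

variable (α) in
def displacementHom (a : H) (ha : ∀ g, a⁻¹ * α g a ∈ fixedSubgroup α) :
    G →* fixedSubgroup α where
  toFun g := ⟨a⁻¹ * α g a, ha g⟩
  map_one' := by ext; simp
  map_mul' g g' := by
    ext
    calc a⁻¹ * α (g * g') a = a⁻¹ * α g (a * (a⁻¹ * α g' a)) := by simp
      _ = a⁻¹ * α g a * (a⁻¹ * α g' a) := by rw [map_mul, ha g' g, mul_assoc]

theorem orbitOf_eq_singleton {a : H} (ha : a ∈ fixedSubgroup α) : orbitOf α a = {a} := by
  ext b
  exact ⟨fun ⟨g, hg⟩ => hg ▸ ha g, fun hb => ⟨1, by simp [Set.mem_singleton_iff.mp hb]⟩⟩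

theorem orbitOf_eq_smul_fixedSubgroup (hF : (Nat.card (fixedSubgroup α)).Prime) {a : H}
    (hdisp : ∀ g, a⁻¹ * α g a ∈ fixedSubgroup α) (ha : a ∉ fixedSubgroup α) :
    orbitOf α a = a • (fixedSubgroup α : Set H) := by
  have := Fact.mk hF
  have hrange : (displacementHom α a hdisp).range = ⊤ := by
    refine (Subgroup.eq_bot_or_eq_top_of_prime_card _).resolve_left fun hbot => ha fun g => ?_
    have : displacementHom α a hdisp g = 1 := by rw [← Subgroup.mem_bot, ← hbot]; exact ⟨g, rfl⟩
    exact (inv_mul_eq_one.mp (congrArg Subtype.val this)).symm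
  ext b
  rw [mem_leftCoset_iff]
  constructor
  · rintro ⟨g, rfl⟩
    exact hdisp g
  · intro hb
    obtain ⟨g, hg⟩ : (⟨a⁻¹ * b, hb⟩ : fixedSubgroup α) ∈ (displacementHom α a hdisp).range :=
      hrange ▸ Subgroup.mem_top _
    exact ⟨g, mul_left_cancel (congrArg Subtype.val hg)⟩

theorem ncard_orbitOf_of_notMem (hF : (Nat.card (fixedSubgroup α)).Prime)
    (hdisp : ∀ g a, a⁻¹ * α g a ∈ fixedSubgroup α) {a : H} (ha : a ∉ fixedSubgroup α) :
    (orbitOf α a).ncard = Nat.card (fixedSubgroup α) := by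
  rw [orbitOf_eq_smul_fixedSubgroup hF (hdisp · a) ha, Set.ncard_smul_set,
    ← Nat.card_coe_set_eq, SetLike.coe_sort_coe]

theorem one_lt_ncard_orbitOf_iff (hF : (Nat.card (fixedSubgroup α)).Prime)
    (hdisp : ∀ g a, a⁻¹ * α g a ∈ fixedSubgroup α) {a : H} :
    1 < (orbitOf α a).ncard ↔ a ∉ fixedSubgroup α := by
  refine ⟨fun h ha => ?_, fun ha => ncard_orbitOf_of_notMem hF hdisp ha ▸ hF.one_lt⟩
  rw [orbitOf_eq_singleton ha, Set.ncard_singleton] at h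
  exact lt_irrefl 1 h

theorem card_nontrivial_orbitOf (hF : (Nat.card (fixedSubgroup α)).Prime)
    (hdisp : ∀ g a, a⁻¹ * α g a ∈ fixedSubgroup α) :
    Nat.card {L : Set H // (∃ a : H, L = orbitOf α a) ∧ 1 < L.ncard} =
      (fixedSubgroup α).index - 1 := by
  rw [← Subgroup.card_leftCosets_ne_self]
  refine Nat.card_congr (Equiv.subtypeEquivRight fun L => ⟨?_, ?_⟩)
  · rintro ⟨⟨a, rfl⟩, h⟩
    have ha := (one_lt_ncard_orbitOf_iff hF hdisp).mp h
    exact ⟨a, ha, orbitOf_eq_smul_fixedSubgroup hF (hdisp · a) ha⟩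
  · rintro ⟨a, ha, rfl⟩
    rw [← orbitOf_eq_smul_fixedSubgroup hF (hdisp · a) ha]
    exact ⟨⟨a, rfl⟩, (one_lt_ncard_orbitOf_iff hF hdisp).mpr ha⟩

end Action

theorem stmt_11_general {G H : Type*} [Group G] [Group H]
    {p q : ℕ} (hp : p.Prime) (hq : q.Prime) (hlt : q < p)
    (hH : Nat.card H = p * q) (hG : Nat.card G ∣ p ^ 2 * q ^ 2)
    (α : G →* MulAut H)
    (hfix : Nat.card {h : H // ∀ g : G, α g h = h} = p) :
    (∀ a : H, 1 < (orbitOf α a).ncard → (orbitOf α a).ncard = p) ∧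
    Nat.card {L : Set H // (∃ a : H, L = orbitOf α a) ∧ 1 < L.ncard} = q - 1 := by
  have hF : Nat.card (fixedSubgroup α) = p := hfix
  have hindex : (fixedSubgroup α).index = q := Nat.eq_of_mul_eq_mul_left hp.pos <| by
    rw [← hF, Subgroup.card_mul_index, hH, hF]
  have : (fixedSubgroup α).Normal := Subgroup.normal_of_index_eq_minFac_card <| by
    rw [hindex, hH, Nat.minFac_mul_of_prime_of_lt hp hq hlt]
  have : (fixedSubgroup α).FiniteIndex := ⟨hindex ▸ hq.ne_zero⟩
  have : Fact q.Prime := ⟨hq⟩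
  have : IsCyclic (H ⧸ fixedSubgroup α) :=
    isCyclic_of_prime_card (by rw [← Subgroup.index_eq_card, hindex])
  have hcop : (Nat.card G).Coprime (fixedSubgroup α).index.totient := by
    rw [hindex, Nat.totient_prime hq]
    exact Nat.coprime_sub_one_of_dvd_sq_mul_sq hp hq hlt hG
  have hdisp := inv_mul_apply_mem_of_quotientAction_eq_one
    (quotientAction_eq_one_of_coprime map_fixedSubgroup hcop)
  have hFp : (Nat.card (fixedSubgroup α)).Prime := hF ▸ hp
  refine ⟨fun a h => ?_, by rw [card_nontrivial_orbitOf hFp hdisp, hindex]⟩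
  rw [ncard_orbitOf_of_notMem hFp hdisp ((one_lt_ncard_orbitOf_iff hFp hdisp).mp h), hF]

theorem stmt_11 {G H : Type*} [Group G] [Group H] [Finite G] [Finite H]
    {p q : ℕ} (hp : p.Prime) (hq : q.Prime) (hlt : q < p) (hmod : p ≡ 1 [MOD q])
    (hH : Nat.card H = p * q) (hG : Nat.card G ∣ p ^ 2 * q ^ 2)
    (α : G →* MulAut H)
    (hfix : Nat.card {h : H // ∀ g : G, α g h = h} = p) :
    (∀ a : H, 1 < (orbitOf α a).ncard → (orbitOf α a).ncard = p) ∧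
    Nat.card {L : Set H // (∃ a : H, L = orbitOf α a) ∧ 1 < L.ncard} = q - 1 :=
  stmt_11_general hp hq hlt hH hG α hfix
end

section
/- Let p > q be prime numbers with p ≡ 1 (mod q), let H be a group of order pq and G a finite group whose order divides p²q², and let α : G →* MulAut H be an action of G on H by automorphisms. If the fixed-point subgroup H^G has order q, then there are no orbits of size p, every non-trivial orbit has size q or q², and c(q) + q·c(q²) = p − 1, where c(m) denotes the number of orbits of size exactly m. -/
open Finset

theorem Nat.eq_or_eq_or_eq_sq_of_dvd_sq_mul_sq {p q d : ℕ} (hp : p.Prime) (hq : q.Prime)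
    (hlt : q < p) (hd : d ∣ p ^ 2 * q ^ 2) (hd1 : d ≠ 1) (hdpq : d < p * q) :
    d = p ∨ d = q ∨ d = q ^ 2 := by
  obtain ⟨y, z, hy, hz, rfl⟩ := Nat.dvd_mul.mp hd
  obtain ⟨i, hi, rfl⟩ := (Nat.dvd_prime_pow hp).mp hy
  obtain ⟨j, hj, rfl⟩ := (Nat.dvd_prime_pow hq).mp hz
  have hpq : 0 < p * q := Nat.mul_pos hp.pos hq.pos
  have := hq.two_le
  interval_cases i <;> interval_cases j <;>
    (try simp only [pow_zero, pow_one, one_mul, mul_one] at hd1 hdpq ⊢) <;>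
    first
    | exact absurd rfl hd1
    | (simp; done)
    | (exfalso; nlinarith)

theorem Nat.eq_zero_and_eq_of_mul_add_mul_eq_mul {p q a n : ℕ} (hp : p.Prime) (hq : q.Prime)
    (hlt : q < p) (hn : 0 < n) (h : p * a + q * n = p * q) : a = 0 ∧ n = p := by
  have hqa : q ∣ a :=
    ((Nat.coprime_primes hq hp).mpr hlt.ne).dvd_of_dvd_mul_left
      ((Nat.dvd_add_left (dvd_mul_right q n)).mp (h ▸ dvd_mul_left q p))
  have ha : a = 0 :=
    Nat.eq_zero_of_dvd_of_lt hqa (Nat.lt_of_mul_lt_mul_left (a := p) (by nlinarith [hq.pos]))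
  subst ha
  exact ⟨rfl, Nat.eq_of_mul_eq_mul_left hq.pos (by linarith)⟩

theorem card_add_mul_card_eq_sub_one_of_sum_eq_mul {ι : Type*} [Fintype ι] {p q : ℕ}
    (hp : p.Prime) (hq : q.Prime) (hlt : q < p) (f : ι → ℕ) (hdvd : ∀ i, f i ∣ p ^ 2 * q ^ 2)
    (hsum : ∑ i, f i = p * q) (hone : #{i | f i = 1} = q) :
    (∀ i, f i = 1 ∨ f i = q ∨ f i = q ^ 2) ∧ #{i | f i = q} + q * #{i | f i = q ^ 2} = p - 1 := by
  have hrest : ∑ i with f i ≠ 1, f i + q = p * q := by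
    rw [← hsum, ← sum_filter_not_add_sum_filter univ (fun i => f i = 1),
      sum_congr rfl fun i hi => (mem_filter.mp hi).2, sum_const, hone, smul_eq_mul, mul_one]
  have hvals (i : ι) : f i = 1 ∨ f i = p ∨ f i = q ∨ f i = q ^ 2 := by
    refine or_iff_not_imp_left.mpr fun h1 =>
      Nat.eq_or_eq_or_eq_sq_of_dvd_sq_mul_sq hp hq hlt (hdvd i) h1 ?_
    have := single_le_sum (s := {j | f j ≠ 1}) (fun j _ => Nat.zero_le (f j))
      (mem_filter.mpr ⟨mem_univ i, h1⟩)
    linarith [hq.pos]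
  have hcount :
      p * #{i | f i = p} + q * (1 + #{i | f i = q} + q * #{i | f i = q ^ 2}) = p * q := by
    have h1p := hp.one_lt
    have h1q := hq.one_lt
    have hqq2 : q < q ^ 2 := by nlinarith
    have hpq2 : p ≠ q ^ 2 := fun h => Nat.Prime.not_prime_pow le_rfl (h ▸ hp)
    have hsplit (i : ι) : f i = (if f i = 1 then 1 else 0) + p * (if f i = p then 1 else 0) +
        q * (if f i = q then 1 else 0) + q ^ 2 * (if f i = q ^ 2 then 1 else 0) := by
      rcases hvals i with h | h | h | h <;> rw [h] <;> split_ifs <;> omega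
    rw [← hsum, sum_congr rfl fun i _ => hsplit i]
    simp only [sum_add_distrib, ← mul_sum, sum_boole, Nat.cast_id, hone]
    ring
  obtain ⟨hnop, hrel⟩ := Nat.eq_zero_and_eq_of_mul_add_mul_eq_mul hp hq hlt (by omega) hcount
  refine ⟨fun i => ?_, by omega⟩
  rcases hvals i with h | h | h | h
  · exact Or.inl h
  · exact absurd (card_eq_zero.mp hnop) (ne_empty_of_mem (mem_filter.mpr ⟨mem_univ i, h⟩))
  · exact Or.inr (Or.inl h)
  · exact Or.inr (Or.inr h)

namespace MulAction

variable (G : Type*) {X : Type*} [Group G] [MulAction G X]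

theorem ncard_orbit_eq_one_iff {x : X} : (orbit G x).ncard = 1 ↔ x ∈ fixedPoints G X := by
  rw [← subsingleton_orbit_iff_mem_fixedPoints, Set.ncard_eq_one]
  refine ⟨fun ⟨y, hy⟩ => hy ▸ Set.subsingleton_singleton, fun h => ⟨x, ?_⟩⟩
  exact h.eq_singleton_of_mem (mem_orbit_self x)

theorem orbitRel.Quotient.ncard_orbit_dvd_card (ω : orbitRel.Quotient G X) :
    ω.orbit.ncard ∣ Nat.card G := by
  rw [orbitRel.Quotient.orbit_eq_orbit_out ω Quotient.out_eq', ← index_stabilizer]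
  exact Subgroup.index_dvd_card _

theorem sum_ncard_orbitRel_quotient_orbit [Finite X] [Fintype (orbitRel.Quotient G X)] :
    ∑ ω : orbitRel.Quotient G X, ω.orbit.ncard = Nat.card X := by
  rw [Nat.card_congr (selfEquivSigmaOrbits' G X), Nat.card_sigma]
  simp only [Nat.card_coe_set_eq]

theorem card_orbitRel_quotient_ncard_orbit_eq_one :
    Nat.card {ω : orbitRel.Quotient G X // ω.orbit.ncard = 1} = Nat.card (fixedPoints G X) := by
  symm
  refine Nat.card_eq_of_bijective (fun x => ⟨Quotient.mk'' x.1, (ncard_orbit_eq_one_iff G).mpr x.2⟩)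
    ⟨fun x y hxy => ?_, fun ω => ?_⟩
  · exact Subtype.ext (mem_fixedPoints'.mp y.2 x (Quotient.exact' (congrArg Subtype.val hxy)))
  · have hω : (orbit G ω.1.out).ncard = 1 := by
      rw [← orbitRel.Quotient.orbit_eq_orbit_out ω.1 Quotient.out_eq']
      exact ω.2
    exact ⟨⟨ω.1.out, (ncard_orbit_eq_one_iff G).mp hω⟩, Subtype.ext ω.1.out_eq'⟩

theorem card_orbits_ncard_eq (m : ℕ) :
    Nat.card {L : Set X // (∃ x, L = orbit G x) ∧ L.ncard = m} =
      Nat.card {ω : orbitRel.Quotient G X // ω.orbit.ncard = m} := by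
  symm
  refine Nat.card_eq_of_bijective (fun ω => ⟨ω.1.orbit, ⟨ω.1.out, ?_⟩, ω.2⟩) ⟨?_, ?_⟩
  · exact orbitRel.Quotient.orbit_eq_orbit_out ω.1 Quotient.out_eq'
  · exact fun ω ω' h => Subtype.ext (orbitRel.Quotient.orbit_injective (congrArg Subtype.val h))
  · rintro ⟨L, ⟨x, rfl⟩, hm⟩
    exact ⟨⟨Quotient.mk'' x, hm⟩, rfl⟩

end MulAction

open MulAction in
theorem stmt_12_general {G H : Type*} [Group G] [Group H] [Finite H]
    {p q : ℕ} (hp : p.Prime) (hq : q.Prime) (hlt : q < p)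
    (hH : Nat.card H = p * q) (hG : Nat.card G ∣ p ^ 2 * q ^ 2)
    (α : G →* MulAut H)
    (hfix : Nat.card {h : H // ∀ g : G, α g h = h} = q) :
    (∀ a : H, (orbitOf α a).ncard ≠ p) ∧
    (∀ a : H, 1 < (orbitOf α a).ncard →
      (orbitOf α a).ncard = q ∨ (orbitOf α a).ncard = q ^ 2) ∧
    Nat.card {L : Set H // (∃ a : H, L = orbitOf α a) ∧ L.ncard = q} +
      q * Nat.card {L : Set H // (∃ a : H, L = orbitOf α a) ∧ L.ncard = q ^ 2} = p - 1 := by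
  let : MulAction G H := compHom H α
  have : Fintype (orbitRel.Quotient G H) := Fintype.ofFinite _
  have hcard (m : ℕ) : Nat.card {L : Set H // (∃ a, L = orbitOf α a) ∧ L.ncard = m} =
      #{ω : orbitRel.Quotient G H | ω.orbit.ncard = m} := by
    rw [← Fintype.card_subtype, ← Nat.card_eq_fintype_card]
    exact card_orbits_ncard_eq G m
  obtain ⟨hsizes, hcount⟩ := card_add_mul_card_eq_sub_one_of_sum_eq_mul hp hq hlt
    (fun ω : orbitRel.Quotient G H => ω.orbit.ncard)
    (fun ω => (orbitRel.Quotient.ncard_orbit_dvd_card G ω).trans hG)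
    ((sum_ncard_orbitRel_quotient_orbit G).trans hH)
    (by rw [← Fintype.card_subtype, ← Nat.card_eq_fintype_card,
      card_orbitRel_quotient_ncard_orbit_eq_one]; exact hfix)
  have hsize (a : H) : (orbitOf α a).ncard = 1 ∨ (orbitOf α a).ncard = q ∨
      (orbitOf α a).ncard = q ^ 2 :=
    hsizes (Quotient.mk'' a)
  refine ⟨fun a ha => ?_, fun a ha => (hsize a).resolve_left ha.ne', by rwa [hcard, hcard]⟩
  rcases hsize a with h | h | h
  · exact hp.one_lt.ne' (ha.symm.trans h)
  · exact hlt.ne' (ha.symm.trans h)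
  · exact Nat.Prime.not_prime_pow le_rfl (ha.symm.trans h ▸ hp)

theorem stmt_12 {G H : Type*} [Group G] [Group H] [Finite G] [Finite H]
    {p q : ℕ} (hp : p.Prime) (hq : q.Prime) (hlt : q < p) (hmod : p ≡ 1 [MOD q])
    (hH : Nat.card H = p * q) (hG : Nat.card G ∣ p ^ 2 * q ^ 2)
    (α : G →* MulAut H)
    (hfix : Nat.card {h : H // ∀ g : G, α g h = h} = q) :
    (∀ a : H, (orbitOf α a).ncard ≠ p) ∧
    (∀ a : H, 1 < (orbitOf α a).ncard →
      (orbitOf α a).ncard = q ∨ (orbitOf α a).ncard = q ^ 2) ∧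
    Nat.card {L : Set H // (∃ a : H, L = orbitOf α a) ∧ L.ncard = q} +
      q * Nat.card {L : Set H // (∃ a : H, L = orbitOf α a) ∧ L.ncard = q ^ 2} = p - 1 :=
  stmt_12_general hp hq hlt hH hG α hfix
end

section
/- Let p > q be prime numbers with p ≡ 1 (mod q), let H be a group of order pq and G a finite group whose order divides p²q², and let α : G →* MulAut H be an action of G on H by automorphisms. If the fixed-point subgroup H^G is trivial (|H^G| = 1), then every non-trivial orbit has size p, q, or q², the number of orbits of size p equals q − 1, and c(q) + q·c(q²) = (p − 1)/q, where c(m) denotes the number of orbits of size exactly m. -/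
open MulAction

theorem Nat.minFac_mul_of_le {p q : ℕ} (hp : p.Prime) (hq : q.Prime) (hqp : q ≤ p) :
    (p * q).minFac = q := by
  refine le_antisymm (Nat.minFac_le_of_dvd hq.two_le (dvd_mul_left q p)) ?_
  refine (Nat.le_minFac.2 fun r hr hrpq => ?_).resolve_left (by nlinarith [hp.two_le, hq.two_le])
  rcases hr.dvd_mul.1 hrpq with h | h
  · exact (Nat.prime_dvd_prime_iff_eq hr hp).1 h ▸ hqp
  · exact ((Nat.prime_dvd_prime_iff_eq hr hq).1 h).ge

theorem Nat.exists_eq_pow_of_dvd_mul_pow_of_lt {d p q a b : ℕ} (hp : p.Prime) (hq : q.Prime)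
    (hd : d ∣ p ^ a * q ^ b) (hdp : d < p) : ∃ k ≤ b, d = q ^ k := by
  have hd0 : d ≠ 0 :=
    ne_zero_of_dvd_ne_zero (mul_pos (pow_pos hp.pos a) (pow_pos hq.pos b)).ne' hd
  have hcop : d.Coprime (p ^ a) := (Nat.coprime_of_lt_prime hd0 hdp hp).symm.pow_right a
  exact (Nat.dvd_prime_pow hq).1 (hcop.dvd_of_dvd_mul_left hd)

theorem prime_dvd_card_of_not_isPGroup {K : Type*} [Group K] {p q a b : ℕ} (hp : p.Prime)
    (hq : q.Prime) (hK : Nat.card K ∣ p ^ a * q ^ b) (hKq : ¬ IsPGroup q K) :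
    p ∣ Nat.card K := by
  by_contra hpK
  have hcop : (Nat.card K).Coprime (p ^ a) := ((hp.coprime_iff_not_dvd).2 hpK).symm.pow_right a
  obtain ⟨n, -, hn⟩ := (Nat.dvd_prime_pow hq).1 (hcop.dvd_of_dvd_mul_left hK)
  exact hKq (IsPGroup.of_card hn)

theorem Subgroup.ncard_coe {H : Type*} [Group H] (P : Subgroup H) :
    (P : Set H).ncard = Nat.card P :=
  (Nat.card_coe_set_eq _).symm

theorem exists_characteristic_card_eq_of_card_eq_mul {H : Type*} [Group H] [Finite H] {p q : ℕ}
    (hp : p.Prime) (hq : q.Prime) (hqp : q < p) (hH : Nat.card H = p * q) :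
    ∃ P : Subgroup H, P.Characteristic ∧ Nat.card P = p := by
  have : Fact p.Prime := ⟨hp⟩
  obtain ⟨P⟩ : Nonempty (Sylow p H) := inferInstance
  have hP : Nat.card P = p := by
    rw [Sylow.card_eq_multiplicity, hH, Nat.factorization_mul hp.ne_zero hq.ne_zero,
      Finsupp.add_apply, hp.factorization_self, hq.factorization, Finsupp.single_eq_of_ne hqp.ne',
      add_zero, pow_one]
  have hindex : (P : Subgroup H).index = (Nat.card H).minFac := by
    have h := (P : Subgroup H).card_mul_index
    rw [hP, hH] at h
    rw [Nat.eq_of_mul_eq_mul_left hp.pos h, hH, Nat.minFac_mul_of_le hp hq hqp.le]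
  exact ⟨P, P.characteristic_of_normal (Subgroup.normal_of_index_eq_minFac_card hindex), hP⟩

section Orbits

variable {K X : Type*} [Group K] [MulAction K X]

theorem ncard_orbit_dvd_card [Finite K] (x : X) : (orbit K x).ncard ∣ Nat.card K :=
  index_stabilizer K x ▸ (stabilizer K x).index_dvd_card

theorem mem_fixedPoints_of_ncard_orbit_eq_one {x : X} (h : (orbit K x).ncard = 1) :
    x ∈ fixedPoints K X := by
  obtain ⟨y, hy⟩ := Set.ncard_eq_one.1 h
  intro k
  have hk : k • x ∈ orbit K x := mem_orbit x k
  have hx : x ∈ orbit K x := mem_orbit_self x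
  rw [hy, Set.mem_singleton_iff] at hk hx
  rw [hk, hx]

theorem not_isPGroup_of_card_fixedPoints_eq_one [Finite X] {q : ℕ} (hq : q.Prime)
    (hX : q ∣ Nat.card X) (hfix : Nat.card (fixedPoints K X) = 1) : ¬ IsPGroup q K := by
  intro hK
  have : Fact q.Prime := ⟨hq⟩
  have hmod := hK.card_modEq_card_fixedPoints X
  rw [hfix] at hmod
  exact hq.not_dvd_one
    (Nat.modEq_zero_iff_dvd.1 ((Nat.modEq_zero_iff_dvd.2 hX).symm.trans hmod).symm)

variable [Finite X]

theorem card_orbits_ncard_eq_mul (m : ℕ) :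
    Nat.card {L : Set X // (∃ a, L = orbit K a) ∧ L.ncard = m} * m =
      {x : X | (orbit K x).ncard = m}.ncard := by
  let e : {x : X | (orbit K x).ncard = m} ≃
      Σ L : {L : Set X // (∃ a, L = orbit K a) ∧ L.ncard = m}, L.1 :=
    { toFun x := ⟨⟨orbit K x, ⟨x, rfl⟩, x.2⟩, ⟨x, mem_orbit_self (x : X)⟩⟩
      invFun y := ⟨y.2, by
        obtain ⟨⟨L, ⟨a, rfl⟩, hL⟩, y, hy⟩ := y
        rwa [Set.mem_ofPred_eq, orbit_eq_iff.2 hy]⟩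
      left_inv _ := rfl
      right_inv := by
        rintro ⟨⟨L, ⟨a, rfl⟩, hL⟩, y, hy⟩
        exact Sigma.subtype_ext (Subtype.ext (orbit_eq_iff.2 hy)) rfl }
  have : Fintype {L : Set X // (∃ a, L = orbit K a) ∧ L.ncard = m} := Fintype.ofFinite _
  rw [← Nat.card_coe_set_eq, Nat.card_congr e, Nat.card_sigma,
    Finset.sum_congr rfl fun L _ => (Nat.card_coe_set_eq L.1).trans L.2.2, Finset.sum_const,
    Finset.card_univ, smul_eq_mul, Nat.card_eq_fintype_card]

theorem card_orbits_ncard_eq_sub_one {p q : ℕ} (hp : 0 < p) (hX : Nat.card X = p * q) {S : Set X}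
    (hS : S.ncard = p) (hset : {x : X | (orbit K x).ncard = p} = Sᶜ) :
    Nat.card {L : Set X // (∃ a, L = orbit K a) ∧ L.ncard = p} = q - 1 := by
  have h := card_orbits_ncard_eq_mul (K := K) (X := X) p
  have hcompl := Set.ncard_add_ncard_compl S
  rw [hset] at h
  rw [hS, hX, ← h] at hcompl
  have : Nat.card {L : Set X // (∃ a, L = orbit K a) ∧ L.ncard = p} + 1 = q :=
    Nat.eq_of_mul_eq_mul_right hp (by linarith)
  omega

theorem card_orbits_ncard_eq_add_mul_eq_div {q : ℕ} (hq : 1 < q) {S : Set X}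
    (hset : {x : X | (orbit K x).ncard = q ∨ (orbit K x).ncard = q ^ 2} = S) :
    Nat.card {L : Set X // (∃ a, L = orbit K a) ∧ L.ncard = q} +
      q * Nat.card {L : Set X // (∃ a, L = orbit K a) ∧ L.ncard = q ^ 2} = S.ncard / q := by
  have hdisj : Disjoint {x : X | (orbit K x).ncard = q} {x : X | (orbit K x).ncard = q ^ 2} :=
    Set.disjoint_left.2 fun x h1 h2 => by
      simp only [Set.mem_ofPred_eq] at h1 h2
      nlinarith
  rw [← hset, Set.ofPred_or, Set.ncard_union_eq hdisj, ← card_orbits_ncard_eq_mul,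
    ← card_orbits_ncard_eq_mul]
  refine (Nat.div_eq_of_eq_mul_left (by omega) ?_).symm
  ring

end Orbits

theorem eq_one_of_mem_fixedPoints {M H : Type*} [Monoid M] [Group H] [MulDistribMulAction M H]
    (hfix : Nat.card (fixedPoints M H) = 1) {x : H} (hx : x ∈ fixedPoints M H) : x = 1 := by
  have := (Nat.card_eq_one_iff_unique.1 hfix).1
  exact congrArg Subtype.val (Subsingleton.elim (⟨x, hx⟩ : fixedPoints M H) ⟨1, smul_one⟩)

theorem ncard_orbit_one {M H : Type*} [Monoid M] [Group H] [MulDistribMulAction M H] :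
    (orbit M (1 : H)).ncard = 1 :=
  Set.ncard_eq_one.2 ⟨1, by ext; simp [mem_orbit_iff, eq_comm]⟩

theorem MulAut.apply_mem_iff {H : Type*} [Group H] {P : Subgroup H} [hP : P.Characteristic]
    (φ : MulAut H) {x : H} : φ x ∈ P ↔ x ∈ P := by
  conv_rhs => rw [← Subgroup.characteristic_iff_comap_eq.1 hP φ]
  rfl

theorem MulAut.eq_one_of_forall_mem_apply_eq {H : Type*} [Group H] {P : Subgroup H}
    (hP : P.index.Prime) {φ : MulAut H} (hφP : ∀ y ∈ P, φ y = y) {x : H} (hx : x ∉ P)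
    (hφx : φ x = x) : φ = 1 := by
  let F := (φ : H →* H).eqLocus (MonoidHom.id H)
  have hPF : P ≤ F := hφP
  have hrel := Subgroup.relIndex_mul_index hPF
  rcases hP.eq_one_or_self_of_dvd F.index (Dvd.intro_left _ hrel) with hF | hF
  · ext y
    exact (Subgroup.index_eq_one.1 hF ▸ Subgroup.mem_top y : y ∈ F)
  · rw [hF, Nat.mul_eq_right hP.ne_zero, Subgroup.relIndex_eq_one] at hrel
    exact absurd (hrel hφx) hx

section Automorphisms

variable {H : Type*} [Group H] [Finite H] (K : Subgroup (MulAut H)) {P : Subgroup H}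
  [P.Characteristic]

theorem ncard_orbit_lt_card_of_mem {x : H} (hx : x ∈ P) (hx1 : x ≠ 1) :
    (orbit K x).ncard < Nat.card P := by
  have hsub : orbit K x ⊆ (P : Set H) \ {1} := by
    rintro _ ⟨k, rfl⟩
    exact ⟨(MulAut.apply_mem_iff k).2 hx, mt EmbeddingLike.map_eq_one_iff.1 hx1⟩
  have h := Set.ncard_le_ncard hsub (Set.toFinite _)
  rw [Set.ncard_sdiff_singleton_of_mem P.one_mem, P.ncard_coe] at h
  have := Nat.card_pos (α := P)
  omega

theorem ncard_orbit_add_card_le_of_not_mem {x : H} (hx : x ∉ P) :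
    (orbit K x).ncard + Nat.card P ≤ Nat.card H := by
  have hsub : orbit K x ⊆ (P : Set H)ᶜ := by
    rintro _ ⟨k, rfl⟩
    exact fun h => hx ((MulAut.apply_mem_iff k).1 h)
  have h := Set.ncard_le_ncard hsub (Set.toFinite _)
  have hcompl := Set.ncard_add_ncard_compl (P : Set H)
  rw [P.ncard_coe] at hcompl
  omega

theorem MulAut.apply_eq_self_of_orderOf_eq {p : ℕ} (hp : p.Prime) (hP : Nat.card P = p)
    {φ : MulAut H} (hφ : orderOf φ = p) {y : H} (hy : y ∈ P) : φ y = y := by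
  by_cases hy1 : y = 1
  · rw [hy1, map_one]
  have hdvd := ncard_orbit_dvd_card (K := Subgroup.zpowers φ) y
  rw [Nat.card_zpowers, hφ] at hdvd
  have hlt := hP ▸ ncard_orbit_lt_card_of_mem (Subgroup.zpowers φ) hy hy1
  have h1 : (orbit (Subgroup.zpowers φ) y).ncard = 1 :=
    (hp.eq_one_or_self_of_dvd _ hdvd).resolve_right hlt.ne
  exact mem_fixedPoints_of_ncard_orbit_eq_one h1 ⟨φ, Subgroup.mem_zpowers φ⟩

variable {K} {p q : ℕ}

theorem prime_dvd_ncard_orbit_of_not_mem (hp : p.Prime) (hP : Nat.card P = p)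
    (hPi : P.index.Prime) (hpK : p ∣ Nat.card K) {x : H} (hx : x ∉ P) :
    p ∣ (orbit K x).ncard := by
  by_contra hpx
  have : Fact p.Prime := ⟨hp⟩
  have hstab : p ∣ Nat.card (stabilizer K x) := by
    rw [← (stabilizer K x).card_mul_index, index_stabilizer] at hpK
    exact (hp.dvd_mul.1 hpK).resolve_right hpx
  obtain ⟨ψ, hψ⟩ := exists_prime_orderOf_dvd_card' p hstab
  have hφ : orderOf ((ψ : K) : MulAut H) = p := by
    rw [Subgroup.orderOf_coe, Subgroup.orderOf_coe, hψ]
  have h1 : ((ψ : K) : MulAut H) = 1 := MulAut.eq_one_of_forall_mem_apply_eq hPi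
    (fun y hy => MulAut.apply_eq_self_of_orderOf_eq hp hP hφ hy) hx ψ.2
  rw [h1, orderOf_one] at hφ
  exact hp.ne_one hφ.symm

theorem ncard_orbit_eq_of_not_mem (hp : p.Prime) (hq : q.Prime) (hqp : q < p)
    (hH : Nat.card H = p * q) (hK : Nat.card K ∣ p ^ 2 * q ^ 2) (hP : Nat.card P = p)
    (hpK : p ∣ Nat.card K) {x : H} (hx : x ∉ P) : (orbit K x).ncard = p := by
  have hPi : P.index = q := by
    have h := P.card_mul_index
    rw [hP, hH] at h
    exact Nat.eq_of_mul_eq_mul_left hp.pos h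
  obtain ⟨m, hm⟩ := prime_dvd_ncard_orbit_of_not_mem hp hP (hPi ▸ hq) hpK hx
  have hmq : m < q := by
    have h := ncard_orbit_add_card_le_of_not_mem K hx
    rw [hm, hP, hH] at h
    nlinarith
  have hmdvd : m ∣ p ^ 1 * q ^ 2 := by
    have h := hm ▸ (ncard_orbit_dvd_card x).trans hK
    rw [show p ^ 2 * q ^ 2 = p * (p ^ 1 * q ^ 2) by ring] at h
    exact Nat.dvd_of_mul_dvd_mul_left hp.pos h
  obtain ⟨k, -, rfl⟩ := Nat.exists_eq_pow_of_dvd_mul_pow_of_lt hp hq hmdvd (hmq.trans hqp)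
  have hk : k < 1 := (Nat.pow_lt_pow_iff_right hq.one_lt).1 (by rwa [pow_one])
  rw [hm, Nat.lt_one_iff.1 hk, pow_zero, mul_one]

theorem ncard_orbit_eq_of_mem (hp : p.Prime) (hq : q.Prime) (hK : Nat.card K ∣ p ^ 2 * q ^ 2)
    (hP : Nat.card P = p) (hfix : Nat.card (fixedPoints K H) = 1) {x : H} (hx : x ∈ P)
    (hx1 : x ≠ 1) : (orbit K x).ncard = q ∨ (orbit K x).ncard = q ^ 2 := by
  obtain ⟨k, hk2, hk⟩ := Nat.exists_eq_pow_of_dvd_mul_pow_of_lt hp hq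
    ((ncard_orbit_dvd_card x).trans hK) (hP ▸ ncard_orbit_lt_card_of_mem K hx hx1)
  interval_cases k
  · exact absurd (eq_one_of_mem_fixedPoints hfix (mem_fixedPoints_of_ncard_orbit_eq_one hk)) hx1
  · exact .inl (hk.trans (pow_one q))
  · exact .inr hk

end Automorphisms

section LevelSets

variable {K H : Type*} [Monoid K] [Group H] [MulDistribMulAction K H] {P : Subgroup H} {p q : ℕ}

theorem setOf_ncard_orbit_eq_compl (hp : p.Prime) (hqp : q < p)
    (hout : ∀ x ∉ P, (orbit K x).ncard = p)
    (hin : ∀ x ∈ P, x ≠ 1 → (orbit K x).ncard = q ∨ (orbit K x).ncard = q ^ 2) :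
    {x : H | (orbit K x).ncard = p} = (P : Set H)ᶜ := by
  ext x
  simp only [Set.mem_ofPred_eq, Set.mem_compl_iff, SetLike.mem_coe]
  refine ⟨fun hx hxP => ?_, hout x⟩
  rcases eq_or_ne x 1 with rfl | hx1
  · rw [ncard_orbit_one] at hx
    exact hp.ne_one hx.symm
  · rcases hin x hxP hx1 with h | h <;> rw [hx] at h
    · exact hqp.ne' h
    · exact absurd (h ▸ hp : (q ^ 2).Prime).eq_one_of_pow (by decide)

theorem setOf_ncard_orbit_eq_or_eq_sq (hp : p.Prime) (hq : q.Prime) (hqp : q < p)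
    (hout : ∀ x ∉ P, (orbit K x).ncard = p)
    (hin : ∀ x ∈ P, x ≠ 1 → (orbit K x).ncard = q ∨ (orbit K x).ncard = q ^ 2) :
    {x : H | (orbit K x).ncard = q ∨ (orbit K x).ncard = q ^ 2} = (P : Set H) \ {1} := by
  ext x
  simp only [Set.mem_ofPred_eq, Set.mem_sdiff, SetLike.mem_coe, Set.mem_singleton_iff]
  refine ⟨fun hx => ⟨?_, ?_⟩, fun hx => hin x hx.1 hx.2⟩
  · by_contra hxP
    rcases hx with h | h <;> rw [hout x hxP] at h
    · exact hqp.ne' h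
    · exact absurd (h ▸ hp : (q ^ 2).Prime).eq_one_of_pow (by decide)
  · rintro rfl
    rw [ncard_orbit_one] at hx
    have := hq.one_lt
    rcases hx with h | h <;> nlinarith

end LevelSets

theorem orbitOf_eq_orbit_range {G H : Type*} [Group G] [Group H] (α : G →* MulAut H) (a : H) :
    orbitOf α a = orbit α.range a := by
  ext x
  constructor
  · rintro ⟨g, rfl⟩
    exact ⟨⟨α g, g, rfl⟩, rfl⟩
  · rintro ⟨⟨_, g, rfl⟩, rfl⟩
    exact ⟨g, rfl⟩

theorem fixedPoints_range {G H : Type*} [Group G] [Group H] (α : G →* MulAut H) :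
    fixedPoints α.range H = {h | ∀ g, α g h = h} := by
  ext x
  exact ⟨fun hx g => hx ⟨α g, g, rfl⟩, fun hx ⟨_, g, rfl⟩ => hx g⟩

theorem stmt_13_general {G H : Type*} [Group G] [Group H] [Finite H]
    {p q : ℕ} (hp : p.Prime) (hq : q.Prime) (hlt : q < p)
    (hH : Nat.card H = p * q) (hG : Nat.card G ∣ p ^ 2 * q ^ 2)
    (α : G →* MulAut H)
    (hfix : Nat.card {h : H // ∀ g : G, α g h = h} = 1) :
    (∀ a : H, 1 < (orbitOf α a).ncard →
      (orbitOf α a).ncard = p ∨ (orbitOf α a).ncard = q ∨ (orbitOf α a).ncard = q ^ 2) ∧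
    Nat.card {L : Set H // (∃ a : H, L = orbitOf α a) ∧ L.ncard = p} = q - 1 ∧
    Nat.card {L : Set H // (∃ a : H, L = orbitOf α a) ∧ L.ncard = q} +
      q * Nat.card {L : Set H // (∃ a : H, L = orbitOf α a) ∧ L.ncard = q ^ 2} =
        (p - 1) / q := by
  obtain ⟨P, _, hP⟩ := exists_characteristic_card_eq_of_card_eq_mul (H := H) hp hq hlt hH
  have hK : Nat.card α.range ∣ p ^ 2 * q ^ 2 := (Subgroup.card_range_dvd α).trans hG
  have hfixK : Nat.card (fixedPoints α.range H) = 1 := by rwa [fixedPoints_range]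
  have hpK : p ∣ Nat.card α.range := prime_dvd_card_of_not_isPGroup hp hq hK
    (not_isPGroup_of_card_fixedPoints_eq_one hq (hH ▸ dvd_mul_left q p) hfixK)
  have hout x := ncard_orbit_eq_of_not_mem (x := x) hp hq hlt hH hK hP hpK
  have hin x := ncard_orbit_eq_of_mem (x := x) hp hq hK hP hfixK
  simp only [orbitOf_eq_orbit_range]
  refine ⟨fun a ha => ?_, card_orbits_ncard_eq_sub_one hp.pos hH (P.ncard_coe.trans hP)
    (setOf_ncard_orbit_eq_compl hp hlt hout hin), ?_⟩
  · by_cases haP : a ∈ P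
    · refine .inr (hin a haP ?_)
      rintro rfl
      exact (ncard_orbit_one (M := α.range) (H := H) ▸ ha).false
    · exact .inl (hout a haP)
  · rw [card_orbits_ncard_eq_add_mul_eq_div hq.one_lt
      (setOf_ncard_orbit_eq_or_eq_sq hp hq hlt hout hin),
      Set.ncard_sdiff_singleton_of_mem P.one_mem, P.ncard_coe, hP]

theorem stmt_13 {G H : Type*} [Group G] [Group H] [Finite G] [Finite H]
    {p q : ℕ} (hp : p.Prime) (hq : q.Prime) (hlt : q < p) (hmod : p ≡ 1 [MOD q])
    (hH : Nat.card H = p * q) (hG : Nat.card G ∣ p ^ 2 * q ^ 2)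
    (α : G →* MulAut H)
    (hfix : Nat.card {h : H // ∀ g : G, α g h = h} = 1) :
    (∀ a : H, 1 < (orbitOf α a).ncard →
      (orbitOf α a).ncard = p ∨ (orbitOf α a).ncard = q ∨ (orbitOf α a).ncard = q ^ 2) ∧
    Nat.card {L : Set H // (∃ a : H, L = orbitOf α a) ∧ L.ncard = p} = q - 1 ∧
    Nat.card {L : Set H // (∃ a : H, L = orbitOf α a) ∧ L.ncard = q} +
      q * Nat.card {L : Set H // (∃ a : H, L = orbitOf α a) ∧ L.ncard = q ^ 2} =
        (p - 1) / q :=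
  stmt_13_general hp hq hlt hH hG α hfix
end

section
/- Let G and H be finite groups of the same order, and let α : G →* MulAut H be an action of G on H by automorphisms. Suppose the action has exactly two non-trivial orbits L₁ and L₂, and that |L₁| and |L₂| are coprime. Then |H| = 6, and the two non-trivial orbits have sizes 2 and 3. -/
namespace Nat

theorem coprime_of_dvd_add_add {f a b : ℕ} (ha : a ∣ f + a + b) (hab : a.Coprime b) :
    f.Coprime a :=
  eq_one_of_dvd_coprimes hab (gcd_dvd_right f a) <|
    (Nat.dvd_add_right (dvd_add (gcd_dvd_left f a) (gcd_dvd_right f a))).mp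
      ((gcd_dvd_right f a).trans ha)

theorem eq_one_two_three_of_mul_le_add_add {f a b : ℕ} (hf : 1 ≤ f) (ha : 2 ≤ a) (hb : 2 ≤ b)
    (hab : a.Coprime b) (hle : f * (a * b) ≤ f + a + b) :
    f = 1 ∧ (a = 2 ∧ b = 3 ∨ a = 3 ∧ b = 2) := by
  have hsum : a + b ≤ a * b := by nlinarith
  have hf1 : f = 1 := by nlinarith [Nat.mul_le_mul_left f hsum]
  subst hf1
  have ha3 : a ≤ 3 := by nlinarith
  have hb3 : b ≤ 3 := by nlinarith
  interval_cases a <;> interval_cases b <;> simp_all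

theorem add_add_eq_six_of_dvd {f a b : ℕ} (ha : 2 ≤ a) (hb : 2 ≤ b) (hab : a.Coprime b)
    (hfn : f ∣ f + a + b) (han : a ∣ f + a + b) (hbn : b ∣ f + a + b) :
    f + a + b = 6 ∧ (a = 2 ∧ b = 3 ∨ a = 3 ∧ b = 2) := by
  have hfa : f.Coprime a := coprime_of_dvd_add_add han hab
  have hfb : f.Coprime b :=
    coprime_of_dvd_add_add (b := a) (by rwa [add_right_comm]) hab.symm
  have hdvd : f * (a * b) ∣ f + a + b :=
    (hfa.mul_right hfb).mul_dvd_of_dvd_of_dvd hfn (hab.mul_dvd_of_dvd_of_dvd han hbn)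
  have hf : 1 ≤ f := Nat.pos_of_ne_zero fun hf0 => by rw [hf0, zero_dvd_iff] at hfn; omega
  obtain ⟨rfl, hab'⟩ :=
    eq_one_two_three_of_mul_le_add_add hf ha hb hab (Nat.le_of_dvd (by omega) hdvd)
  exact ⟨by omega, hab'⟩

end Nat

namespace MulAction

variable {G X : Type*} [Group G] [MulAction G X]

theorem one_lt_ncard_orbit_iff [Finite X] {x : X} :
    1 < (orbit G x).ncard ↔ x ∉ fixedPoints G X := by
  rw [← not_le, Set.ncard_le_one_iff_subsingleton, subsingleton_orbit_iff_mem_fixedPoints]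

theorem disjoint_fixedPoints_orbit {a : X} (ha : a ∉ fixedPoints G X) :
    Disjoint (fixedPoints G X) (orbit G a) := by
  refine Set.disjoint_left.2 fun x hx hxa => ha ?_
  rw [← subsingleton_orbit_iff_mem_fixedPoints, ← orbit_eq_iff.2 hxa]
  exact subsingleton_orbit_iff_mem_fixedPoints.2 hx

theorem card_eq_ncard_fixedPoints_add_ncard_orbit_add_ncard_orbit [Finite X] {a b : X}
    (hab : orbit G a ≠ orbit G b) (ha : a ∉ fixedPoints G X) (hb : b ∉ fixedPoints G X)
    (hcover : ∀ x ∉ fixedPoints G X, x ∈ orbit G a ∨ x ∈ orbit G b) :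
    Nat.card X = (fixedPoints G X).ncard + (orbit G a).ncard + (orbit G b).ncard := by
  have huniv : fixedPoints G X ∪ orbit G a ∪ orbit G b = Set.univ := by
    refine Set.eq_univ_of_forall fun x => ?_
    by_cases hx : x ∈ fixedPoints G X
    · exact .inl (.inl hx)
    · exact (hcover x hx).elim (fun h => .inl (.inr h)) .inr
  rw [← Set.ncard_univ, ← huniv, Set.ncard_union_eq, Set.ncard_union_eq
    (disjoint_fixedPoints_orbit ha)]
  exact Set.disjoint_union_left.2
    ⟨disjoint_fixedPoints_orbit hb, (orbit.eq_or_disjoint a b).resolve_left hab⟩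

theorem ncard_orbit_dvd_card (x : X) : (orbit G x).ncard ∣ Nat.card G :=
  index_stabilizer G x ▸ Subgroup.index_dvd_card _

end MulAction

theorem ncard_fixedPoints_dvd_card {M H : Type*} [Monoid M] [Group H]
    [MulDistribMulAction M H] : (MulAction.fixedPoints M H).ncard ∣ Nat.card H :=
  Nat.card_coe_set_eq (MulAction.fixedPoints M H) ▸
    Subgroup.card_subgroup_dvd_card (FixedPoints.subgroup M H)

open MulAction in
theorem stmt_16_general {G H : Type*} [Group G] [Group H] [Finite H]
    (α : G →* MulAut H) (hcard : Nat.card G = Nat.card H) (a b : H)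
    (hne : orbitOf α a ≠ orbitOf α b)
    (ha : 1 < (orbitOf α a).ncard) (hb : 1 < (orbitOf α b).ncard)
    (honly : ∀ c : H, 1 < (orbitOf α c).ncard →
      orbitOf α c = orbitOf α a ∨ orbitOf α c = orbitOf α b)
    (hco : Nat.Coprime (orbitOf α a).ncard (orbitOf α b).ncard) :
    Nat.card H = 6 ∧
      ((orbitOf α a).ncard = 2 ∧ (orbitOf α b).ncard = 3 ∨
        (orbitOf α a).ncard = 3 ∧ (orbitOf α b).ncard = 2) := by
  let _ : MulDistribMulAction G H := MulDistribMulAction.compHom H α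
  have horbit : ∀ c : H, orbitOf α c = orbit G c := fun _ => rfl
  simp only [horbit] at hne ha hb honly hco ⊢
  have hcover : ∀ x ∉ fixedPoints G H, x ∈ orbit G a ∨ x ∈ orbit G b := fun x hx =>
    (honly x (one_lt_ncard_orbit_iff.2 hx)).imp orbit_eq_iff.1 orbit_eq_iff.1
  have hsum := card_eq_ncard_fixedPoints_add_ncard_orbit_add_ncard_orbit hne
    (one_lt_ncard_orbit_iff.1 ha) (one_lt_ncard_orbit_iff.1 hb) hcover
  obtain ⟨h6, hab⟩ := Nat.add_add_eq_six_of_dvd ha hb hco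
    (hsum ▸ ncard_fixedPoints_dvd_card) (hsum ▸ hcard ▸ ncard_orbit_dvd_card a)
    (hsum ▸ hcard ▸ ncard_orbit_dvd_card b)
  exact ⟨hsum.trans h6, hab⟩

theorem stmt_16 {G H : Type*} [Group G] [Group H] [Finite G] [Finite H]
    (α : G →* MulAut H) (hcard : Nat.card G = Nat.card H) (a b : H)
    (hne : orbitOf α a ≠ orbitOf α b)
    (ha : 1 < (orbitOf α a).ncard) (hb : 1 < (orbitOf α b).ncard)
    (honly : ∀ c : H, 1 < (orbitOf α c).ncard →
      orbitOf α c = orbitOf α a ∨ orbitOf α c = orbitOf α b)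
    (hco : Nat.Coprime (orbitOf α a).ncard (orbitOf α b).ncard) :
    Nat.card H = 6 ∧
      ((orbitOf α a).ncard = 2 ∧ (orbitOf α b).ncard = 3 ∨
        (orbitOf α a).ncard = 3 ∧ (orbitOf α b).ncard = 2) :=
  stmt_16_general α hcard a b hne ha hb honly hco
end

section
/- Let H be a group, F a subgroup of H of index 2, and x ∈ H with x ∉ F. Let Aut_F(H) = {φ ∈ Aut(H) : φ(f) = f for all f ∈ F}, a subgroup of Aut(H). Then for every φ ∈ Aut_F(H) the element x⁻¹·φ(x) lies in F, and the map h : Aut_F(H) → F defined by h(φ) = x⁻¹·φ(x) is an injective group homomorphism. -/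
/-- The subgroup of `MulAut H` of automorphisms fixing the subgroup `F` pointwise. -/
def autFix {H : Type*} [Group H] (F : Subgroup H) : Subgroup (MulAut H) where
  carrier := {φ : MulAut H | ∀ f ∈ F, φ f = f}
  one_mem' := fun f _ => rfl
  mul_mem' := fun {φ ψ} hφ hψ f hf => by
    simp only [MulAut.mul_apply, hψ f hf, hφ f hf]
  inv_mem' := fun {φ} hφ f hf => by
    have : φ ((φ⁻¹ : MulAut H) f) = φ f := by
      rw [hφ f hf]
      exact φ.apply_symm_apply f
    exact φ.injective (by rw [this, hφ f hf])

theorem Subgroup.mul_inv_mem_of_index_two {G : Type*} [Group G] {K : Subgroup G}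
    (hK : K.index = 2) {a b : G} (ha : a ∉ K) (hb : b ∉ K) : a * b⁻¹ ∈ K := by
  rw [Subgroup.mul_mem_iff_of_index_two hK, Subgroup.inv_mem_iff]
  exact iff_of_false ha hb

namespace autFix

variable {H : Type*} [Group H] {F : Subgroup H}

theorem apply_mem_iff {φ : MulAut H} (hφ : φ ∈ autFix F) (y : H) : φ y ∈ F ↔ y ∈ F :=
  ⟨fun h => φ.injective (hφ _ h) ▸ h, fun h => by rwa [hφ y h]⟩

theorem inv_mul_apply_mem (hF : F.index = 2) {φ : MulAut H} (hφ : φ ∈ autFix F) (x : H) :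
    x⁻¹ * φ x ∈ F := by
  rw [Subgroup.mul_mem_iff_of_index_two hF, Subgroup.inv_mem_iff, apply_mem_iff hφ]

/-- `φ ↦ x⁻¹ φ(x)` is multiplicative because `φ` fixes the element `x⁻¹ ψ(x)` of `F`:
`x⁻¹ φ(ψ x) = x⁻¹ φ(x · x⁻¹ ψ(x)) = x⁻¹ φ(x) · x⁻¹ ψ(x)`. -/
def invMulApplyHom (hF : F.index = 2) (x : H) : autFix F →* F where
  toFun φ := ⟨x⁻¹ * (φ : MulAut H) x, inv_mul_apply_mem hF φ.2 x⟩
  map_one' := by ext; simp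
  map_mul' φ ψ := by
    ext
    have hfix : (φ : MulAut H) (x⁻¹ * (ψ : MulAut H) x) = x⁻¹ * (ψ : MulAut H) x :=
      φ.2 _ (inv_mul_apply_mem hF ψ.2 x)
    calc x⁻¹ * ((φ : MulAut H) * ψ) x
        = x⁻¹ * (φ : MulAut H) (x * (x⁻¹ * (ψ : MulAut H) x)) := by
          rw [mul_inv_cancel_left, MulAut.mul_apply]
      _ = x⁻¹ * (φ : MulAut H) x * (x⁻¹ * (ψ : MulAut H) x) := by
          rw [map_mul, hfix, mul_assoc]

@[simp]
theorem coe_invMulApplyHom (hF : F.index = 2) (x : H) (φ : autFix F) :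
    (invMulApplyHom hF x φ : H) = x⁻¹ * (φ : MulAut H) x :=
  rfl

/-- `F` and any `x ∉ F` generate `H`, since every `y ∉ F` is `(y x⁻¹) x` with `y x⁻¹ ∈ F`. -/
theorem eq_one_of_apply_eq (hF : F.index = 2) {x : H} (hx : x ∉ F) {φ : MulAut H}
    (hφ : φ ∈ autFix F) (hφx : φ x = x) : φ = 1 := by
  ext y
  by_cases hy : y ∈ F
  · exact hφ y hy
  · have hyx := Subgroup.mul_inv_mem_of_index_two hF hy hx
    calc φ y = φ (y * x⁻¹ * x) := by rw [inv_mul_cancel_right]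
      _ = y := by rw [map_mul, hφ _ hyx, hφx, inv_mul_cancel_right]

theorem invMulApplyHom_injective (hF : F.index = 2) {x : H} (hx : x ∉ F) :
    Function.Injective (invMulApplyHom hF x) := by
  refine (injective_iff_map_eq_one _).mpr fun φ hφ => Subtype.ext ?_
  have hφx : x = (φ : MulAut H) x := inv_mul_eq_one.mp (congrArg Subtype.val hφ)
  exact eq_one_of_apply_eq hF hx φ.2 hφx.symm

end autFix

theorem stmt_17 {H : Type*} [Group H] (F : Subgroup H) (hF : F.index = 2)
    (x : H) (hx : x ∉ F) :
    (∀ φ : autFix F, x⁻¹ * (φ : MulAut H) x ∈ F) ∧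
    ∃ h : autFix F →* F, Function.Injective h ∧
      ∀ φ : autFix F, (h φ : H) = x⁻¹ * (φ : MulAut H) x :=
  ⟨fun φ => autFix.inv_mul_apply_mem hF φ.2 x,
    autFix.invMulApplyHom hF x, autFix.invMulApplyHom_injective hF hx,
    autFix.coe_invMulApplyHom hF x⟩
end

section
/- Let F be a non-trivial finite abelian group (written additively) and let φ : F → F be a group endomorphism such that the kernel of φ has at most 2 elements and φ(φ(x)) = −2·φ(x) for all x ∈ F. Then: (1) the Sylow 2-subgroup of F is isomorphic to (ℤ/2^i ℤ) × (ℤ/2^j ℤ) for some natural numbers i ≥ j with j ≤ 1; and (2) for every element x ∈ F of odd order, φ(x) = −2·x. -/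
/-!
Since `φ ∘ (φ + 2) = 0`, the element `φ x + 2 • x` lies in `ker φ`, of order at most `2`;
when `x` has odd order so does `φ x + 2 • x`, hence it vanishes.

Let `T` be the `2`-primary component, of exponent `2 ^ i`. Iterating `φ ∘ φ = -2 • φ` gives
`φ ^ (i + 1) = (-2) ^ i • φ`, which kills `T`, while `|ker (φ ^ (i + 1))| ≤ 2 ^ (i + 1)`.
Hence `|T| ≤ 2 · exp T`: an element `g` of maximal order has index at most `2` in `T`,
and if `y ∉ ⟨g⟩` then `2 • y = c • g` with `c` even by maximality of the order of `g`, so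
`y - (c / 2) • g` generates a complement of `⟨g⟩` of order `2`.
-/

open AddSubgroup

theorem AddMonoidHom.card_ker_comp_le {G H K : Type*} [AddGroup G] [AddGroup H] [AddGroup K]
    [Finite H] (f : G →+ H) (g : H →+ K) :
    Nat.card (g.comp f).ker ≤ Nat.card g.ker * Nat.card f.ker := by
  have hf : f.ker ≤ (g.comp f).ker := fun x hx => by simp [AddMonoidHom.mem_ker.mp hx]
  calc Nat.card (g.comp f).ker
      = Nat.card f.ker * f.ker.relIndex (g.comp f).ker := by
        rw [← relIndex_bot_left, ← relIndex_bot_left, relIndex_mul_relIndex _ _ _ bot_le hf]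
    _ = Nat.card ((g.comp f).ker.map f) * Nat.card f.ker := by
        rw [relIndex_ker, mul_comm]
    _ ≤ Nat.card g.ker * Nat.card f.ker := by
        gcongr
        exact card_le_of_le (map_le_iff_le_comap.mpr (AddMonoidHom.comap_ker g f).ge)

theorem AddMonoid.End.card_ker_pow_le {G : Type*} [AddGroup G] [Finite G] (φ : AddMonoid.End G)
    (n : ℕ) : Nat.card (φ ^ n).ker ≤ Nat.card φ.ker ^ n := by
  induction n with
  | zero =>
    rw [pow_zero, pow_zero]
    exact (card_bot (G := G)).le
  | succ n ih =>
    rw [pow_succ, pow_succ]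
    exact (AddMonoidHom.card_ker_comp_le _ _).trans (Nat.mul_le_mul ih le_rfl)

theorem AddMonoid.End.pow_succ_apply_eq_zsmul {G : Type*} [AddCommGroup G]
    (φ : AddMonoid.End G) {a : ℤ} (hφ : ∀ x, φ (φ x) = a • φ x) (n : ℕ) (x : G) :
    (φ ^ (n + 1)) x = a ^ n • φ x := by
  induction n generalizing x with
  | zero => simp
  | succ n ih =>
    rw [pow_succ, AddMonoid.End.coe_mul, Function.comp_apply, ih, hφ, smul_smul, pow_succ]

theorem AddMonoidHom.apply_eq_zsmul_of_coprime_card_ker {G : Type*} [AddCommGroup G]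
    (φ : G →+ G) {a : ℤ} (hφ : ∀ x, φ (φ x) = a • φ x) {x : G}
    (hx : (addOrderOf x).Coprime (Nat.card φ.ker)) : φ x = a • x := by
  set z := φ x - a • x
  have hz : z ∈ φ.ker := by rw [AddMonoidHom.mem_ker, map_sub, map_zsmul, hφ, sub_self]
  have hzx : addOrderOf z ∣ addOrderOf x := addOrderOf_dvd_of_nsmul_eq_zero <| by
    rw [smul_sub, ← map_nsmul, smul_comm, addOrderOf_nsmul_eq_zero, map_zero, smul_zero, sub_zero]
  have hzk : addOrderOf z ∣ Nat.card φ.ker :=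
    addOrderOf_mk z hz ▸ addOrderOf_dvd_natCard (⟨z, hz⟩ : φ.ker)
  exact sub_eq_zero.mp (AddMonoid.addOrderOf_eq_one_iff.mp (Nat.eq_one_of_dvd_coprimes hx hzx hzk))

noncomputable def AddSubgroup.prodAddEquivOfDisjoint {G : Type*} [AddCommGroup G] [Finite G]
    {H K : AddSubgroup G} (hHK : Disjoint H K) (hcard : Nat.card H * Nat.card K = Nat.card G) :
    H × K ≃+ G :=
  AddEquiv.ofBijective (H.subtype.coprod K.subtype) <| by
    refine Function.Injective.bijective_of_nat_card_le ?_ (by rw [Nat.card_prod, hcard])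
    rw [injective_iff_map_eq_zero]
    rintro ⟨⟨x, hx⟩, ⟨y, hy⟩⟩ hxy
    obtain ⟨rfl, rfl⟩ := disjoint_iff_add_eq_zero.mp hHK hx hy hxy
    rfl

noncomputable def zmultiplesAddEquivZMod {G : Type*} [AddGroup G] (g : G) :
    zmultiples g ≃+ ZMod (addOrderOf g) :=
  (zmodAddEquivOfGenerator (g := ⟨g, mem_zmultiples g⟩)
    (fun ⟨_, k, hk⟩ => ⟨k, Subtype.ext hk⟩) (Nat.card_zmultiples g)).symm

theorem exists_nsmul_eq_zero_sub_mem_zmultiples {G : Type*} [AddCommGroup G] {p i : ℕ}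
    (hp : p ≠ 0) {g y : G} (hg : addOrderOf g = p ^ i) (hy : p ^ i • y = 0)
    (hpy : p • y ∈ zmultiples g) : ∃ w, p • w = 0 ∧ y - w ∈ zmultiples g := by
  obtain ⟨c, hc⟩ := mem_zmultiples_iff.mp hpy
  cases i with
  | zero =>
    rw [pow_zero, AddMonoid.addOrderOf_eq_one_iff] at hg
    exact ⟨y, by rw [← hc, hg, zsmul_zero], by rw [sub_self]; exact zero_mem _⟩
  | succ k =>
    have hdvd : ((p : ℤ) ^ k * p) ∣ p ^ k * c := by
      rw [← pow_succ, ← Nat.cast_pow, ← hg, addOrderOf_dvd_iff_zsmul_eq_zero, mul_zsmul, hc,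
        ← natCast_zsmul, smul_smul, ← pow_succ, ← Nat.cast_pow, natCast_zsmul, hy]
    obtain ⟨d, rfl⟩ := (Int.dvd_of_mul_dvd_mul_left (pow_ne_zero k (by exact_mod_cast hp))) hdvd
    refine ⟨y - d • g, ?_, by rw [sub_sub_cancel]; exact zsmul_mem_zmultiples g d⟩
    rw [smul_sub, ← natCast_zsmul (d • g) p, smul_smul, hc, sub_self]

theorem exists_cyclic_complement_of_card_le {p : ℕ} [hp : Fact p.Prime] {T : Type*}
    [AddCommGroup T] [Finite T] {i : ℕ} {g : T} (hg : addOrderOf g = p ^ i)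
    (hexp : ∀ t : T, p ^ i • t = 0) (hcard : Nat.card T ≤ p ^ (i + 1)) :
    ∃ w : T, ∃ j ≤ 1, addOrderOf w = p ^ j ∧ Disjoint (zmultiples g) (zmultiples w) ∧
      Nat.card T = p ^ i * p ^ j := by
  set X := zmultiples g
  by_cases hX : ∀ y, y ∈ X
  · refine ⟨0, 0, zero_le_one, by simp, by simp, ?_⟩
    rw [pow_zero, mul_one, ← hg, ← Nat.card_zmultiples,
      Nat.card_congr (Equiv.subtypeUnivEquiv hX)]
  obtain ⟨y, hy⟩ := not_forall.mp hX
  have hTX : Nat.card T = Nat.card (T ⧸ X) * p ^ i := by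
    rw [card_eq_card_quotient_mul_card_addSubgroup X, Nat.card_zmultiples, hg]
  have hQ : Nat.card (T ⧸ X) ≤ p := by
    rw [pow_succ, hTX, mul_comm] at hcard
    exact Nat.le_of_mul_le_mul_left hcard (pow_pos hp.out.pos i)
  set q : T ⧸ X := QuotientAddGroup.mk y
  have hq : addOrderOf q = p := by
    have hq0 : q ≠ 0 := by rwa [Ne, QuotientAddGroup.eq_zero_iff]
    obtain ⟨k, -, hk⟩ := (Nat.dvd_prime_pow hp.out).mp <| addOrderOf_dvd_of_nsmul_eq_zero <|
      show p ^ i • q = 0 by rw [← QuotientAddGroup.mk_nsmul, hexp, QuotientAddGroup.mk_zero]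
    have hk1 : k ≤ 1 := by
      rw [← Nat.pow_le_pow_iff_right hp.out.one_lt, pow_one, ← hk]
      exact addOrderOf_le_card.trans hQ
    have hk0 : k ≠ 0 := by
      rintro rfl
      exact hq0 (AddMonoid.addOrderOf_eq_one_iff.mp (hk.trans (pow_zero p)))
    rw [hk, show k = 1 by omega, pow_one]
  have hQp : Nat.card (T ⧸ X) = p :=
    le_antisymm hQ (hq ▸ Nat.le_of_dvd Nat.card_pos (addOrderOf_dvd_natCard q))
  have hpy : p • y ∈ X := by
    rw [← QuotientAddGroup.eq_zero_iff, QuotientAddGroup.mk_nsmul, ← hq,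
      addOrderOf_nsmul_eq_zero]
  obtain ⟨w, hpw, hyw⟩ := exists_nsmul_eq_zero_sub_mem_zmultiples hp.out.ne_zero hg (hexp y) hpy
  have hwq : (w : T ⧸ X) = q := QuotientAddGroup.eq_iff_sub_mem.mpr (sub_mem_comm_iff.mp hyw)
  have hw : addOrderOf w = p :=
    Nat.dvd_antisymm (addOrderOf_dvd_of_nsmul_eq_zero hpw)
      (hq ▸ hwq ▸ addOrderOf_map_dvd (QuotientAddGroup.mk' X) w)
  refine ⟨w, 1, le_rfl, by rw [pow_one, hw], ?_, by rw [hTX, hQp, pow_one, mul_comm]⟩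
  rw [disjoint_def]
  rintro - hvX ⟨k, rfl⟩
  have hpk : (p : ℤ) ∣ k := by
    rw [← hq, ← hwq, addOrderOf_dvd_iff_zsmul_eq_zero, ← QuotientAddGroup.mk_zsmul,
      QuotientAddGroup.eq_zero_iff]
    exact hvX
  exact addOrderOf_dvd_iff_zsmul_eq_zero.mp (hw ▸ hpk)

theorem exists_addEquiv_zmod_prod_of_card_le {p : ℕ} [hp : Fact p.Prime] {T : Type*}
    [AddCommGroup T] [Finite T] {i : ℕ} (hexp : AddMonoid.exponent T = p ^ i)
    (hcard : Nat.card T ≤ p ^ (i + 1)) :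
    ∃ j, j ≤ i ∧ j ≤ 1 ∧ Nonempty (T ≃+ ZMod (p ^ i) × ZMod (p ^ j)) := by
  obtain ⟨g, hg⟩ :=
    AddMonoid.exists_addOrderOf_eq_exponent (AddMonoid.ExponentExists.of_finite (G := T))
  rw [hexp] at hg
  obtain ⟨w, j, hj, hw, hdisj, hT⟩ := exists_cyclic_complement_of_card_le hg
    (fun t => hexp ▸ AddMonoid.exponent_nsmul_eq_zero t) hcard
  have hji : j ≤ i := (Nat.pow_dvd_pow_iff_le_right hp.out.one_lt).mp
    (hw ▸ hexp ▸ AddMonoid.addOrder_dvd_exponent w)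
  refine ⟨j, hji, hj, ⟨?_⟩⟩
  rw [← hg, ← hw]
  have hcard' : Nat.card (zmultiples g) * Nat.card (zmultiples w) = Nat.card T := by
    rw [Nat.card_zmultiples, Nat.card_zmultiples, hg, hw, hT]
  exact (prodAddEquivOfDisjoint hdisj hcard').symm.trans
    ((zmultiplesAddEquivZMod g).prodCongr (zmultiplesAddEquivZMod w))

theorem AddCommGroup.exists_exponent_primaryComponent_eq_pow {G : Type*} [AddCommGroup G]
    [Finite G] (p : ℕ) [Fact p.Prime] :
    ∃ i, AddMonoid.exponent (primaryComponent G p) = p ^ i := by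
  obtain ⟨g, hg⟩ := AddMonoid.exists_addOrderOf_eq_exponent
    (AddMonoid.ExponentExists.of_finite (G := primaryComponent G p))
  obtain ⟨i, hi⟩ := mem_primaryComponent_iff_addOrderOf.mp g.2
  exact ⟨i, by rw [← hg, ← addOrderOf_coe, hi]⟩

theorem stmt_18_general {F : Type*} [AddCommGroup F] [Finite F]
    (φ : F →+ F) (hker : Nat.card φ.ker ≤ 2)
    (hphi : ∀ x : F, φ (φ x) = -(2 • φ x)) :
    (∃ i j : ℕ, j ≤ i ∧ j ≤ 1 ∧
      Nonempty ((AddCommGroup.primaryComponent F 2) ≃+ (ZMod (2 ^ i) × ZMod (2 ^ j)))) ∧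
    ∀ x : F, Odd (addOrderOf x) → φ x = -(2 • x) := by
  have neg_two_zsmul (v : F) : (-2 : ℤ) • v = -(2 • v) := by rw [neg_smul, ofNat_zsmul]
  have hphi' (x : F) : φ (φ x) = (-2 : ℤ) • φ x := by rw [hphi, neg_two_zsmul]
  refine ⟨?_, fun x hx => ?_⟩
  · set T := AddCommGroup.primaryComponent F 2
    obtain ⟨i, hexp⟩ := AddCommGroup.exists_exponent_primaryComponent_eq_pow (G := F) 2
    let ψ : AddMonoid.End F := φ
    have hT : T ≤ (ψ ^ (i + 1)).ker := fun t ht => by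
      have h2t : 2 ^ i • t = 0 :=
        congrArg Subtype.val (hexp ▸ AddMonoid.exponent_nsmul_eq_zero (⟨t, ht⟩ : T))
      show (ψ ^ (i + 1)) t = 0
      rw [AddMonoid.End.pow_succ_apply_eq_zsmul ψ hphi', ← map_zsmul,
        neg_pow, mul_smul, show (2 : ℤ) ^ i • t = 0 by exact_mod_cast h2t, smul_zero, map_zero]
    have hcard : Nat.card T ≤ 2 ^ (i + 1) :=
      (AddSubgroup.card_le_of_le hT).trans <| (AddMonoid.End.card_ker_pow_le ψ (i + 1)).trans <|
        Nat.pow_le_pow_left hker _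
    obtain ⟨j, hji, hj, he⟩ := exists_addEquiv_zmod_prod_of_card_le hexp hcard
    exact ⟨i, j, hji, hj, he⟩
  · have hk : Nat.card φ.ker ∣ 2 := by
      have := Nat.card_pos (α := φ.ker)
      interval_cases Nat.card φ.ker <;> norm_num
    rw [AddMonoidHom.apply_eq_zsmul_of_coprime_card_ker φ hphi'
      (hx.coprime_two_right.coprime_dvd_right hk), neg_two_zsmul]

theorem stmt_18 {F : Type*} [AddCommGroup F] [Finite F] [Nontrivial F]
    (φ : F →+ F) (hker : Nat.card φ.ker ≤ 2)
    (hphi : ∀ x : F, φ (φ x) = -(2 • φ x)) :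
    (∃ i j : ℕ, j ≤ i ∧ j ≤ 1 ∧
      Nonempty ((AddCommGroup.primaryComponent F 2) ≃+ (ZMod (2 ^ i) × ZMod (2 ^ j)))) ∧
    ∀ x : F, Odd (addOrderOf x) → φ x = -(2 • x) :=
  stmt_18_general φ hker hphi
end
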